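/- arXiv:1810.03553 — 5 statements merged into one kernel-verified Lean document; each statement's English description precedes it below -/
import Mathlib

section
/- Suppose the Riesz-spectral hypotheses hold. Then there exist constants C₀, C₁, C₂ > 0, independent of X₀, d and U, such that for every X₀ ∈ D(𝒜), every twice continuously differentiable d : [0,∞) → ℂ^m and every continuously differentiable U : [0,∞) → H with ℬ X₀ = d(0), every classical solution X associated with (X₀, d, U) satisfies, for all t ≥ 0, ‖X(t)‖ ≤ C₀ e^{−κ₀ t} ‖X₀‖ + C₁ · sup_{0≤s≤t} ‖d(s)‖ + C₂ · sup_{0≤s≤t} ‖U(s)‖. -/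
noncomputable section

local notation "⟪" x ", " y "⟫" => @inner ℂ _ _ x y

/-- `f` is linear on the subset `s`. -/
def IsLinearOn {H K : Type*} [AddCommGroup H] [Module ℂ H] [AddCommGroup K] [Module ℂ K]
    (f : H → K) (s : Set H) : Prop :=
  (∀ x ∈ s, ∀ y ∈ s, f (x + y) = f x + f y) ∧ ∀ (c : ℂ), ∀ x ∈ s, f (c • x) = c • f x

/-- `X` is a classical solution of the boundary control system `(A, Bop)` with domain `domA`,
associated with initial condition `X0`, boundary disturbance `d` and distributed
disturbance `U`. -/
def IsClassicalSolution {H : Type*} [NormedAddCommGroup H] [NormedSpace ℂ H] {m : ℕ}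
    (A : H → H) (Bop : H → EuclideanSpace ℂ (Fin m)) (domA : Set H)
    (X0 : H) (d : ℝ → EuclideanSpace ℂ (Fin m)) (U : ℝ → H) (X : ℝ → H) : Prop :=
  ContinuousOn X (Set.Ici 0) ∧
  (∀ t ∈ Set.Ici (0:ℝ), X t ∈ domA) ∧
  ContinuousOn (fun t => A (X t)) (Set.Ici 0) ∧
  (∀ t ∈ Set.Ici (0:ℝ), HasDerivWithinAt X (A (X t) + U t) (Set.Ici 0) t) ∧
  X 0 = X0 ∧
  ∀ t ∈ Set.Ici (0:ℝ), Bop (X t) = d t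

open MeasureTheory intervalIntegral Set Filter

private lemma le_of_sq_le_sq' {a b : ℝ} (ha : 0 ≤ a) (hb : 0 ≤ b) (h : a^2 ≤ b^2) : a ≤ b := by
  nlinarith

/-- Cauchy-Schwarz for interval integrals of continuous functions. -/
private lemma integral_cs {t : ℝ} (ht : 0 ≤ t) {f g : ℝ → ℝ}
    (hf : ContinuousOn f (Set.Icc 0 t)) (hg : ContinuousOn g (Set.Icc 0 t)) :
    (∫ s in (0:ℝ)..t, f s * g s) ^ 2
      ≤ (∫ s in (0:ℝ)..t, f s ^ 2) * (∫ s in (0:ℝ)..t, g s ^ 2) := by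
  have hu : Set.uIcc (0:ℝ) t = Set.Icc 0 t := Set.uIcc_of_le ht
  have hif : IntervalIntegrable (fun s => f s ^ 2) volume 0 t :=
    ((hf.pow 2).mono hu.subset).intervalIntegrable
  have hig : IntervalIntegrable (fun s => g s ^ 2) volume 0 t :=
    ((hg.pow 2).mono hu.subset).intervalIntegrable
  have hifg : IntervalIntegrable (fun s => f s * g s) volume 0 t :=
    ((hf.mul hg).mono hu.subset).intervalIntegrable
  set F := ∫ s in (0:ℝ)..t, f s ^ 2
  set G := ∫ s in (0:ℝ)..t, g s ^ 2
  set I := ∫ s in (0:ℝ)..t, f s * g s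
  have key : ∀ r : ℝ, 0 ≤ G * (r * r) + (2 * I) * r + F := by
    intro r
    have h0 : 0 ≤ ∫ s in (0:ℝ)..t, (r * g s + f s) ^ 2 :=
      intervalIntegral.integral_nonneg ht (fun s _ => sq_nonneg _)
    have hexp : (∫ s in (0:ℝ)..t, (r * g s + f s) ^ 2)
        = G * (r * r) + (2 * I) * r + F := by
      have : ∀ s, (r * g s + f s) ^ 2
          = (r * r) * (g s ^ 2) + ((2 * r) * (f s * g s) + f s ^ 2) := by
        intro s; ring
      rw [intervalIntegral.integral_congr (fun s _ => this s)]
      rw [intervalIntegral.integral_add ((hig.const_mul (r*r)))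
        ((hifg.const_mul (2*r)).add hif),
        intervalIntegral.integral_add (hifg.const_mul (2*r)) hif,
        intervalIntegral.integral_const_mul, intervalIntegral.integral_const_mul]
      ring
    rw [hexp] at h0; exact h0
  have hd := discrim_le_zero key
  rw [discrim] at hd
  nlinarith [hd]

/-- bound for ∫_0^t exp (ρ (t - s)) ds. -/
private lemma exp_integral_le {ρ κ t : ℝ} (hκ : 0 < κ) (hρ : ρ ≤ -κ) (ht : 0 ≤ t) :
    (∫ s in (0:ℝ)..t, Real.exp (ρ * (t - s))) ≤ 1 / κ := by
  have hρ0 : ρ < 0 := lt_of_le_of_lt hρ (by linarith)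
  have hderiv : ∀ s ∈ Set.uIcc (0:ℝ) t,
      HasDerivAt (fun u => -(1/ρ) * Real.exp (ρ * (t - u))) (Real.exp (ρ * (t - s))) s := by
    intro s _
    have h1 : HasDerivAt (fun u : ℝ => ρ * (t - u)) (ρ * (-1)) s :=
      ((hasDerivAt_id s).const_sub t).const_mul ρ
    have h2 := (h1.exp).const_mul (-(1/ρ))
    refine h2.congr_deriv ?_
    rw [show -(1/ρ) * (Real.exp (ρ * (t - s)) * (ρ * -1)) = Real.exp (ρ * (t - s)) * (ρ / ρ) by ring,
      div_self hρ0.ne, mul_one]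
  have hcont : IntervalIntegrable (fun s => Real.exp (ρ * (t - s))) volume 0 t := by
    apply Continuous.intervalIntegrable
    exact (Real.continuous_exp.comp (continuous_const.mul (continuous_const.sub continuous_id)))
  have hint := intervalIntegral.integral_eq_sub_of_hasDerivAt hderiv hcont
  rw [hint]
  have hE : Real.exp (ρ * (t - t)) = 1 := by simp
  have hE2 : 0 < Real.exp (ρ * (t - 0)) := Real.exp_pos _
  have hE3 : Real.exp (ρ * (t - 0)) ≤ 1 := by
    rw [Real.exp_le_one_iff]; nlinarith
  have hinv : 0 < -(1/ρ) := by
    have := inv_lt_zero.mpr hρ0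
    rw [one_div]; linarith
  have hle : -(1/ρ) ≤ 1/κ := by
    have h3 : κ ≤ -ρ := by linarith
    have h4 := one_div_le_one_div_of_le hκ h3
    rw [one_div, one_div] at h4 ⊢
    rw [← inv_neg]
    exact h4
  nlinarith




private lemma coeff_bound {H : Type*} [NormedAddCommGroup H] [InnerProductSpace ℂ H]
    (φ ψ : ℕ → H) (mR : ℝ) (hmR : 0 ≤ mR)
    (hRieszLower : ∀ (s : Finset ℕ) (a : ℕ → ℂ),
      mR * ∑ n ∈ s, ‖a n‖ ^ 2 ≤ ‖∑ n ∈ s, a n • φ n‖ ^ 2)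
    (hexpansion : ∀ x : H,
      Filter.Tendsto (fun N => ∑ n ∈ Finset.range N, ⟪ψ n, x⟫ • φ n) Filter.atTop (nhds x))
    (S : Finset ℕ) (x : H) :
    mR * ∑ n ∈ S, ‖⟪ψ n, x⟫‖ ^ 2 ≤ ‖x‖ ^ 2 := by
  obtain ⟨N0, hN0⟩ := S.exists_nat_subset_range
  have h1 : Filter.Tendsto (fun N => ‖∑ n ∈ Finset.range N, ⟪ψ n, x⟫ • φ n‖ ^ 2)
      Filter.atTop (nhds (‖x‖ ^ 2)) := ((hexpansion x).norm).pow 2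
  refine ge_of_tendsto h1 ?_
  filter_upwards [Filter.eventually_ge_atTop N0] with N hN
  calc mR * ∑ n ∈ S, ‖⟪ψ n, x⟫‖ ^ 2
      ≤ mR * ∑ n ∈ Finset.range N, ‖⟪ψ n, x⟫‖ ^ 2 := by
        apply mul_le_mul_of_nonneg_left _ hmR
        exact Finset.sum_le_sum_of_subset_of_nonneg
          (hN0.trans (Finset.range_subset_range.2 hN)) (fun i _ _ => by positivity)
    _ ≤ _ := hRieszLower _ _



set_option maxHeartbeats 2000000 in
/-- ISS estimate for classical solutions of a Riesz-spectral boundary control system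
(Theorem 1 of the paper). -/
theorem statement_0 {H : Type*} [NormedAddCommGroup H] [InnerProductSpace ℂ H] [CompleteSpace H]
    [TopologicalSpace.SeparableSpace H]
    {m : ℕ} (hm : 0 < m)
    (domA : Set H) (A : H → H) (Bop : H → EuclideanSpace ℂ (Fin m))
    (hdomA : ∀ x ∈ domA, ∀ y ∈ domA, ∀ a b : ℂ, a • x + b • y ∈ domA)
    (hAlin : IsLinearOn A domA) (hBoplin : IsLinearOn Bop domA)
    (domAstar : Set H) (Astar : H → H)
    (hdense : Dense {x : H | x ∈ domA ∧ Bop x = 0})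
    (hadjdom : ∀ z : H, z ∈ domAstar ↔ ∃ w : H, ∀ x ∈ domA, Bop x = 0 → ⟪w, x⟫ = ⟪z, A x⟫)
    (hadj : ∀ z ∈ domAstar, ∀ x ∈ domA, Bop x = 0 → ⟪Astar z, x⟫ = ⟪z, A x⟫)
    (B : EuclideanSpace ℂ (Fin m) →L[ℂ] H)
    (hBdom : ∀ v, B v ∈ domA) (hBlift : ∀ v, Bop (B v) = v)
    (hABcont : Continuous fun v => A (B v))
    (lam : ℕ → ℂ) (φ ψ : ℕ → H)
    (hφmem : ∀ n, φ n ∈ domA ∧ Bop (φ n) = 0)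
    (heig : ∀ n, A (φ n) = lam n • φ n)
    (hψmem : ∀ n, ψ n ∈ domAstar)
    (heigstar : ∀ n, Astar (ψ n) = (starRingEnd ℂ) (lam n) • ψ n)
    (hbiorth : ∀ n k : ℕ, ⟪ψ k, φ n⟫ = if n = k then (1:ℂ) else 0)
    (mR MR : ℝ) (hmR : 0 < mR) (hmRMR : mR ≤ MR)
    (hRieszLower : ∀ (s : Finset ℕ) (a : ℕ → ℂ),
      mR * ∑ n ∈ s, ‖a n‖ ^ 2 ≤ ‖∑ n ∈ s, a n • φ n‖ ^ 2)
    (hRieszUpper : ∀ (s : Finset ℕ) (a : ℕ → ℂ),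
      ‖∑ n ∈ s, a n • φ n‖ ^ 2 ≤ MR * ∑ n ∈ s, ‖a n‖ ^ 2)
    (hexpansion : ∀ x : H,
      Filter.Tendsto (fun N => ∑ n ∈ Finset.range N, ⟪ψ n, x⟫ • φ n) Filter.atTop (nhds x))
    (ω0 : ℝ) (hω0 : IsLUB (Set.range fun n => (lam n).re) ω0) (hω0neg : ω0 < 0)
    (hζbdd : BddAbove (Set.range fun n => ‖lam n‖ / |(lam n).re|)) :
    ∃ C0 C1 C2 : ℝ, 0 < C0 ∧ 0 < C1 ∧ 0 < C2 ∧
      ∀ (X0 : H) (d : ℝ → EuclideanSpace ℂ (Fin m)) (U : ℝ → H) (X : ℝ → H),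
        X0 ∈ domA → ContDiffOn ℝ 2 d (Set.Ici 0) → ContDiffOn ℝ 1 U (Set.Ici 0) →
        Bop X0 = d 0 → IsClassicalSolution A Bop domA X0 d U X →
        ∀ t ∈ Set.Ici (0:ℝ),
          ‖X t‖ ≤ C0 * Real.exp (ω0 * t) * ‖X0‖
            + C1 * sSup ((fun s => ‖d s‖) '' Set.Icc 0 t)
            + C2 * sSup ((fun s => ‖U s‖) '' Set.Icc 0 t) := by
  classical
  obtain ⟨hAadd, hAsmul⟩ := hAlin
  obtain ⟨hBadd, hBsmul⟩ := hBoplin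
  have hκ0 : (0:ℝ) < -ω0 := by linarith
  have hρle : ∀ n, (lam n).re ≤ ω0 := fun n => hω0.1 ⟨n, rfl⟩
  have hρneg : ∀ n, (lam n).re < 0 := fun n => lt_of_le_of_lt (hρle n) hω0neg
  set ζ : ℝ := sSup (Set.range fun n => ‖lam n‖ / |(lam n).re|) with hζdef
  have hζn : ∀ n, ‖lam n‖ ≤ ζ * (-(lam n).re) := by
    intro n
    have h1 : ‖lam n‖ / |(lam n).re| ≤ ζ := le_csSup hζbdd ⟨n, rfl⟩
    rw [abs_of_neg (hρneg n)] at h1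
    have h3 : 0 < -(lam n).re := by linarith [hρneg n]
    exact (div_le_iff₀ h3).mp h1
  have hζ0 : 0 ≤ ζ :=
    le_trans (div_nonneg (norm_nonneg _) (abs_nonneg _)) (le_csSup hζbdd ⟨0, rfl⟩)
  -- the continuous linear map v ↦ A (B v)
  let ABlin : EuclideanSpace ℂ (Fin m) →ₗ[ℂ] H :=
    { toFun := fun v => A (B v)
      map_add' := fun v w => by
        show A (B (v + w)) = A (B v) + A (B w)
        rw [map_add]; exact hAadd _ (hBdom v) _ (hBdom w)
      map_smul' := fun c v => by
        show A (B (c • v)) = c • A (B v)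
        rw [B.map_smul]; exact hAsmul c _ (hBdom v) }
  let ABL : EuclideanSpace ℂ (Fin m) →L[ℂ] H := LinearMap.toContinuousLinearMap ABlin
  have hABL : ∀ v, A (B v) = ABL v := fun v => rfl
  set CAB : ℝ := ‖ABL‖ with hCABdef
  have hCAB0 : 0 ≤ CAB := norm_nonneg _
  set KB : ℝ := Real.sqrt (∑ j : Fin m, ‖B (EuclideanSpace.single j (1:ℂ))‖ ^ 2) with hKBdef
  have hKB0 : 0 ≤ KB := Real.sqrt_nonneg _
  have hKBsq : KB ^ 2 = ∑ j : Fin m, ‖B (EuclideanSpace.single j (1:ℂ))‖ ^ 2 :=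
    Real.sq_sqrt (by positivity)
  set R : ℝ := Real.sqrt MR / Real.sqrt mR with hRdef
  have hMR0 : 0 < MR := lt_of_lt_of_le hmR hmRMR
  have hR0 : 0 < R := div_pos (Real.sqrt_pos.2 hMR0) (Real.sqrt_pos.2 hmR)
  have hsmR : (0:ℝ) < Real.sqrt mR := Real.sqrt_pos.2 hmR
  refine ⟨R + 1, R * (CAB / (-ω0) + ζ * KB) + 1, R / (-ω0) + 1, by linarith, ?_, ?_, ?_⟩
  · have h1 : 0 ≤ R * (CAB / (-ω0) + ζ * KB) :=
      mul_nonneg hR0.le (add_nonneg (div_nonneg hCAB0 hκ0.le) (mul_nonneg hζ0 hKB0))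
    linarith
  · have h1 : 0 ≤ R / (-ω0) := div_nonneg hR0.le hκ0.le
    linarith
  intro X0 d U X hX0dom hd hU hd0 hsol t ht
  obtain ⟨hXc, hXdom, hAXc, hXd, hX00, hBX⟩ := hsol
  have ht0 : (0:ℝ) ≤ t := ht
  have hIccsub : Set.Icc (0:ℝ) t ⊆ Set.Ici 0 := Set.Icc_subset_Ici_self
  have hdc : ContinuousOn d (Set.Icc 0 t) := (hd.continuousOn).mono hIccsub
  have hUc : ContinuousOn U (Set.Icc 0 t) := (hU.continuousOn).mono hIccsub
  set Sd : ℝ := sSup ((fun s => ‖d s‖) '' Set.Icc 0 t) with hSddef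
  set SU : ℝ := sSup ((fun s => ‖U s‖) '' Set.Icc 0 t) with hSUdef
  have hSdb : BddAbove ((fun s => ‖d s‖) '' Set.Icc 0 t) :=
    (isCompact_Icc.image_of_continuousOn hdc.norm).bddAbove
  have hSUb : BddAbove ((fun s => ‖U s‖) '' Set.Icc 0 t) :=
    (isCompact_Icc.image_of_continuousOn hUc.norm).bddAbove
  have hSdmem : ∀ s ∈ Set.Icc (0:ℝ) t, ‖d s‖ ≤ Sd := fun s hs => le_csSup hSdb ⟨s, hs, rfl⟩
  have hSUmem : ∀ s ∈ Set.Icc (0:ℝ) t, ‖U s‖ ≤ SU := fun s hs => le_csSup hSUb ⟨s, hs, rfl⟩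
  have hSd0 : 0 ≤ Sd := le_trans (norm_nonneg _) (hSdmem 0 ⟨le_refl _, ht0⟩)
  have hSU0 : 0 ≤ SU := le_trans (norm_nonneg _) (hSUmem 0 ⟨le_refl _, ht0⟩)
  -- per-mode coefficient functions
  have hucc : Set.uIcc (0:ℝ) t = Set.Icc 0 t := Set.uIcc_of_le ht0
  have hqcont : ∀ n : ℕ, ContinuousOn (fun s => ⟪ψ n, B (d s)⟫) (Set.Icc 0 t) :=
    fun n => continuousOn_const.inner (B.continuous.comp_continuousOn hdc)
  have hWcont : ContinuousOn (fun s => ABL (d s) + U s) (Set.Icc 0 t) :=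
    (ABL.continuous.comp_continuousOn hdc).add hUc
  have hwcont : ∀ n : ℕ, ContinuousOn (fun s => ⟪ψ n, ABL (d s) + U s⟫) (Set.Icc 0 t) :=
    fun n => continuousOn_const.inner hWcont
  have hexpc : ∀ c : ℂ, Continuous (fun s : ℝ => Complex.exp (c * s)) := fun c =>
    Complex.continuous_exp.comp (continuous_const.mul Complex.continuous_ofReal)
  have hiw : ∀ n : ℕ, IntervalIntegrable
      (fun s => Complex.exp (-lam n * s) * ⟪ψ n, ABL (d s) + U s⟫) volume 0 t := by
    intro n
    apply ContinuousOn.intervalIntegrable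
    rw [hucc]
    exact ((hexpc (-lam n)).continuousOn).mul (hwcont n)
  have hiq : ∀ n : ℕ, IntervalIntegrable
      (fun s => Complex.exp (-lam n * s) * ⟪ψ n, B (d s)⟫) volume 0 t := by
    intro n
    apply ContinuousOn.intervalIntegrable
    rw [hucc]
    exact ((hexpc (-lam n)).continuousOn).mul (hqcont n)
  -- the key identity expressing each mode by variation of constants
  have hkey : ∀ n : ℕ, ⟪ψ n, X t⟫
      = Complex.exp (lam n * t) * ⟪ψ n, X 0⟫
        + Complex.exp (lam n * t)
          * (∫ s in (0:ℝ)..t, Complex.exp (-lam n * s) * ⟪ψ n, ABL (d s) + U s⟫)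
        - lam n * (Complex.exp (lam n * t)
          * (∫ s in (0:ℝ)..t, Complex.exp (-lam n * s) * ⟪ψ n, B (d s)⟫)) := by
    intro n
    -- the inner-product identity with the adjoint
    have ha : ∀ s ∈ Set.Ici (0:ℝ), ⟪ψ n, A (X s) + U s⟫
        = lam n * ⟪ψ n, X s⟫ - lam n * ⟪ψ n, B (d s)⟫ + ⟪ψ n, ABL (d s) + U s⟫ := by
      intro s hs
      have hXs : X s ∈ domA := hXdom s hs
      have hBd : B (d s) ∈ domA := hBdom _
      have hy : X s - B (d s) ∈ domA := by
        have h := hdomA (X s) hXs (B (d s)) hBd 1 (-1)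
        simpa [sub_eq_add_neg] using h
      have hsum : (X s - B (d s)) + B (d s) = X s := sub_add_cancel _ _
      have hker : Bop (X s - B (d s)) = 0 := by
        have h1 := hBadd _ hy _ hBd
        rw [hsum, hBX s hs, hBlift] at h1
        have h2 := congrArg (fun z => z - d s) h1
        simpa using h2.symm
      have hAs : A (X s) = A (X s - B (d s)) + A (B (d s)) := by
        have h1 := hAadd _ hy _ hBd
        rw [hsum] at h1
        exact h1
      have hinnerA : ⟪ψ n, A (X s - B (d s))⟫ = lam n * ⟪ψ n, X s - B (d s)⟫ := by
        rw [← hadj (ψ n) (hψmem n) _ hy hker, heigstar, inner_smul_left, Complex.conj_conj]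
      rw [inner_add_right, hAs, inner_add_right, hinnerA, inner_sub_right, hABL,
        inner_add_right]
      ring
    -- derivative of the exponentially weighted coefficient
    have hb : ∀ s ∈ Set.Ici (0:ℝ),
        HasDerivWithinAt (fun u : ℝ => Complex.exp (-lam n * u) * ⟪ψ n, X u⟫)
          (Complex.exp (-lam n * s)
            * (⟪ψ n, ABL (d s) + U s⟫ - lam n * ⟪ψ n, B (d s)⟫)) (Set.Ici 0) s := by
      intro s hs
      have h1 : HasDerivAt (fun u : ℝ => Complex.exp (-lam n * u))
          (-lam n * Complex.exp (-lam n * s)) s := by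
        have hc : HasDerivAt (fun z : ℂ => Complex.exp (-lam n * z))
            (Complex.exp (-lam n * (s:ℂ)) * (-lam n * 1)) (s:ℂ) :=
          (Complex.hasDerivAt_exp _).comp (s:ℂ) ((hasDerivAt_id ((s:ℂ))).const_mul (-lam n))
        have h2 := hc.comp_ofReal
        simpa [mul_comm] using h2
      have h2 : HasDerivWithinAt (fun u : ℝ => ⟪ψ n, X u⟫) ⟪ψ n, A (X s) + U s⟫
          (Set.Ici 0) s := by
        have hL := ((innerSL ℂ (ψ n)).restrictScalars ℝ).hasFDerivAt
          (x := X s)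
        exact hL.comp_hasDerivWithinAt s (hXd s hs)
      have h3 := (h1.hasDerivWithinAt).mul h2
      refine h3.congr_deriv ?_
      rw [ha s hs]
      ring
    -- fundamental theorem of calculus
    have hcontI : ContinuousOn (fun u : ℝ => Complex.exp (-lam n * u) * ⟪ψ n, X u⟫)
        (Set.Icc 0 t) :=
      ((hexpc (-lam n)).continuousOn).mul ((continuousOn_const.inner hXc).mono hIccsub)
    have hintg : IntervalIntegrable (fun s => Complex.exp (-lam n * s)
        * (⟪ψ n, ABL (d s) + U s⟫ - lam n * ⟪ψ n, B (d s)⟫)) volume 0 t := by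
      apply ContinuousOn.intervalIntegrable
      rw [hucc]
      exact ((hexpc (-lam n)).continuousOn).mul
        ((hwcont n).sub (continuousOn_const.mul (hqcont n)))
    have hftc := intervalIntegral.integral_eq_sub_of_hasDeriv_right_of_le ht0 hcontI
      (fun x hx => (hb x (le_of_lt hx.1)).mono (fun y hy => le_of_lt (lt_trans hx.1 hy)))
      hintg
    -- split the integral
    have hsplit : ∫ s in (0:ℝ)..t, Complex.exp (-lam n * s)
          * (⟪ψ n, ABL (d s) + U s⟫ - lam n * ⟪ψ n, B (d s)⟫)
        = (∫ s in (0:ℝ)..t, Complex.exp (-lam n * s) * ⟪ψ n, ABL (d s) + U s⟫)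
          - lam n * ∫ s in (0:ℝ)..t, Complex.exp (-lam n * s) * ⟪ψ n, B (d s)⟫ := by
      rw [intervalIntegral.integral_congr
        (g := fun s => Complex.exp (-lam n * s) * ⟪ψ n, ABL (d s) + U s⟫
          - lam n * (Complex.exp (-lam n * s) * ⟪ψ n, B (d s)⟫)) (fun s _ => by ring),
        intervalIntegral.integral_sub (hiw n) ((hiq n).const_mul (lam n)),
        intervalIntegral.integral_const_mul]
    have hprod : Complex.exp (lam n * t) * Complex.exp (-lam n * t) = 1 := by
      rw [← Complex.exp_add]
      norm_num
    have hzero : Complex.exp (-lam n * ((0:ℝ):ℂ)) = 1 := by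
      norm_num
    rw [hsplit] at hftc
    have h4 := congrArg (fun z => Complex.exp (lam n * t) * z) hftc
    simp only [mul_sub] at h4
    linear_combination (-1 : ℂ) * h4 - ⟪ψ n, X t⟫ * hprod
      + Complex.exp (lam n * (t:ℝ)) * ⟪ψ n, X 0⟫ * hzero
  -- basic norm bound for the exponential-weighted integrals
  have hexpre : ∀ (c : ℂ) (u : ℝ), ‖Complex.exp (c * u)‖ = Real.exp (c.re * u) := by
    intro c u
    rw [Complex.norm_exp]
    congr 1
    simp [Complex.mul_re]
  have hbase : ∀ (n : ℕ) (f : ℝ → ℂ), ContinuousOn f (Set.Icc 0 t) →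
      ‖Complex.exp (lam n * t) * ∫ s in (0:ℝ)..t, Complex.exp (-lam n * s) * f s‖
        ≤ ∫ s in (0:ℝ)..t, Real.exp ((lam n).re * (t - s)) * ‖f s‖ := by
    intro n f hf
    have hnormint : ‖∫ s in (0:ℝ)..t, Complex.exp (-lam n * s) * f s‖
        ≤ ∫ s in (0:ℝ)..t, Real.exp (-(lam n).re * s) * ‖f s‖ := by
      refine le_trans (intervalIntegral.norm_integral_le_integral_norm ht0) (le_of_eq ?_)
      apply intervalIntegral.integral_congr
      intro s _
      dsimp only
      rw [norm_mul]
      congr 1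
      have := hexpre (-lam n) s
      simpa using this
    calc ‖Complex.exp (lam n * t) * ∫ s in (0:ℝ)..t, Complex.exp (-lam n * s) * f s‖
        = Real.exp ((lam n).re * t) * ‖∫ s in (0:ℝ)..t, Complex.exp (-lam n * s) * f s‖ := by
          rw [norm_mul, hexpre]
      _ ≤ Real.exp ((lam n).re * t) * ∫ s in (0:ℝ)..t, Real.exp (-(lam n).re * s) * ‖f s‖ :=
          mul_le_mul_of_nonneg_left hnormint (Real.exp_pos _).le
      _ = ∫ s in (0:ℝ)..t, Real.exp ((lam n).re * (t - s)) * ‖f s‖ := by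
          rw [← intervalIntegral.integral_const_mul]
          apply intervalIntegral.integral_congr
          intro s _
          dsimp only
          rw [← mul_assoc, ← Real.exp_add]
          ring_nf
  -- pointwise exponential comparison
  have hexpmono : ∀ (n : ℕ), ∀ s ∈ Set.Icc (0:ℝ) t,
      Real.exp ((lam n).re * (t - s)) ≤ Real.exp (ω0 * (t - s)) := by
    intro n s hs
    exact Real.exp_le_exp.2 (mul_le_mul_of_nonneg_right (hρle n) (by linarith [hs.2]))
  -- Cauchy-Schwarz bound for the w-integral
  have hIbound : ∀ n : ℕ,
      ‖Complex.exp (lam n * t)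
        * ∫ s in (0:ℝ)..t, Complex.exp (-lam n * s) * ⟪ψ n, ABL (d s) + U s⟫‖ ^ 2
      ≤ (1/(-ω0)) * ∫ s in (0:ℝ)..t,
          Real.exp (ω0 * (t - s)) * ‖⟪ψ n, ABL (d s) + U s⟫‖ ^ 2 := by
    intro n
    have hwn : ContinuousOn (fun s => ‖⟪ψ n, ABL (d s) + U s⟫‖) (Set.Icc 0 t) := (hwcont n).norm
    have hfc : ContinuousOn (fun s => Real.exp ((lam n).re * (t - s) / 2)) (Set.Icc 0 t) :=
      (Real.continuous_exp.comp ((continuous_const.mul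
        (continuous_const.sub continuous_id)).div_const 2)).continuousOn
    have hgc : ContinuousOn (fun s => Real.exp ((lam n).re * (t - s) / 2)
        * ‖⟪ψ n, ABL (d s) + U s⟫‖) (Set.Icc 0 t) := hfc.mul hwn
    have hcs := integral_cs ht0 hfc hgc
    have hfg : ∀ s : ℝ, Real.exp ((lam n).re * (t - s) / 2)
        * (Real.exp ((lam n).re * (t - s) / 2) * ‖⟪ψ n, ABL (d s) + U s⟫‖)
        = Real.exp ((lam n).re * (t - s)) * ‖⟪ψ n, ABL (d s) + U s⟫‖ := by
      intro s
      rw [← mul_assoc, ← Real.exp_add]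
      ring_nf
    have hfsq : ∀ s : ℝ, Real.exp ((lam n).re * (t - s) / 2) ^ 2
        = Real.exp ((lam n).re * (t - s)) := by
      intro s
      rw [sq, ← Real.exp_add]
      ring_nf
    have hgsq : ∀ s : ℝ, (Real.exp ((lam n).re * (t - s) / 2)
        * ‖⟪ψ n, ABL (d s) + U s⟫‖) ^ 2
        = Real.exp ((lam n).re * (t - s)) * ‖⟪ψ n, ABL (d s) + U s⟫‖ ^ 2 := by
      intro s
      rw [mul_pow, hfsq s]
    rw [intervalIntegral.integral_congr (fun s _ => hfg s),
      intervalIntegral.integral_congr (fun s _ => hfsq s),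
      intervalIntegral.integral_congr (fun s _ => hgsq s)] at hcs
    have h1 := hbase n _ (hwcont n)
    have h2 : ‖Complex.exp (lam n * t)
        * ∫ s in (0:ℝ)..t, Complex.exp (-lam n * s) * ⟪ψ n, ABL (d s) + U s⟫‖ ^ 2
        ≤ (∫ s in (0:ℝ)..t, Real.exp ((lam n).re * (t - s)) * ‖⟪ψ n, ABL (d s) + U s⟫‖) ^ 2 :=
      pow_le_pow_left₀ (norm_nonneg _) h1 2
    refine le_trans (le_trans h2 hcs) ?_
    have hint1 : (∫ s in (0:ℝ)..t, Real.exp ((lam n).re * (t - s))) ≤ 1/(-ω0) :=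
      exp_integral_le hκ0 (by simpa using hρle n) ht0
    have hint2 : (∫ s in (0:ℝ)..t, Real.exp ((lam n).re * (t - s))
          * ‖⟪ψ n, ABL (d s) + U s⟫‖ ^ 2)
        ≤ ∫ s in (0:ℝ)..t, Real.exp (ω0 * (t - s)) * ‖⟪ψ n, ABL (d s) + U s⟫‖ ^ 2 := by
      apply intervalIntegral.integral_mono_on ht0
      · apply ContinuousOn.intervalIntegrable
        rw [hucc]
        exact ((Real.continuous_exp.comp (continuous_const.mul
          (continuous_const.sub continuous_id))).continuousOn).mul (hwn.pow 2)
      · apply ContinuousOn.intervalIntegrable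
        rw [hucc]
        exact ((Real.continuous_exp.comp (continuous_const.mul
          (continuous_const.sub continuous_id))).continuousOn).mul (hwn.pow 2)
      · intro s hs
        exact mul_le_mul_of_nonneg_right (hexpmono n s hs) (by positivity)
    have hnn2 : 0 ≤ ∫ s in (0:ℝ)..t, Real.exp ((lam n).re * (t - s))
        * ‖⟪ψ n, ABL (d s) + U s⟫‖ ^ 2 :=
      intervalIntegral.integral_nonneg ht0 (fun s _ => by positivity)
    have hnn3 : 0 ≤ ∫ s in (0:ℝ)..t, Real.exp (ω0 * (t - s))
        * ‖⟪ψ n, ABL (d s) + U s⟫‖ ^ 2 := le_trans hnn2 hint2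
    exact mul_le_mul hint1 hint2 hnn2 (by positivity)
  -- the ℓ² row norms of the boundary operator coefficients
  obtain ⟨r, hrdef⟩ : ∃ r : ℕ → ℝ, r = fun n =>
      Real.sqrt (∑ j : Fin m, ‖⟪ψ n, B (EuclideanSpace.single j (1:ℂ))⟫‖ ^ 2) := ⟨_, rfl⟩
  have hr0 : ∀ n, 0 ≤ r n := by
    intro n
    simp only [hrdef]
    exact Real.sqrt_nonneg _
  have hrsq : ∀ n, r n ^ 2
      = ∑ j : Fin m, ‖⟪ψ n, B (EuclideanSpace.single j (1:ℂ))⟫‖ ^ 2 := by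
    intro n
    have hnn : (0:ℝ) ≤ ∑ j : Fin m, ‖⟪ψ n, B (EuclideanSpace.single j (1:ℂ))⟫‖ ^ 2 :=
      Finset.sum_nonneg fun j _ => sq_nonneg _
    simp only [hrdef]
    exact Real.sq_sqrt hnn
  have hqr : ∀ (n : ℕ) (s : ℝ), ‖⟪ψ n, B (d s)⟫‖ ≤ r n * ‖d s‖ := by
    intro n s
    obtain ⟨v, hvdef⟩ : ∃ v : EuclideanSpace ℂ (Fin m), v =
        fun j => (starRingEnd ℂ) ⟪ψ n, B (EuclideanSpace.single j (1:ℂ))⟫ := ⟨WithLp.toLp 2 _, rfl⟩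
    have hdecomp : d s = ∑ j : Fin m, d s j • EuclideanSpace.single j (1:ℂ) := by
      have h := (EuclideanSpace.basisFun (Fin m) ℂ).sum_repr (d s)
      simp only [EuclideanSpace.basisFun_repr, EuclideanSpace.basisFun_apply] at h
      exact h.symm
    have hq_eq : ⟪ψ n, B (d s)⟫ = ⟪v, d s⟫ := by
      have hL : ⟪ψ n, B (d s)⟫
          = ∑ j : Fin m, d s j * ⟪ψ n, B (EuclideanSpace.single j (1:ℂ))⟫ := by
        conv_lhs => rw [hdecomp]
        rw [map_sum, inner_sum]
        apply Finset.sum_congr rfl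
        intro j _
        rw [B.map_smul, inner_smul_right]
      have hR : (⟪v, d s⟫ : ℂ)
          = ∑ j : Fin m, (starRingEnd ℂ) (v j) * d s j := by
        rw [PiLp.inner_apply]
        refine Finset.sum_congr rfl fun j _ => ?_
        rw [RCLike.inner_apply]
        ring
      rw [hL, hR]
      apply Finset.sum_congr rfl
      intro j _
      rw [hvdef]
      simp only [Complex.conj_conj]
      ring
    rw [hq_eq]
    refine le_trans (norm_inner_le_norm v (d s)) ?_
    apply mul_le_mul_of_nonneg_right _ (norm_nonneg _)
    apply le_of_eq
    rw [EuclideanSpace.norm_eq, hrdef]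
    congr 1
    apply Finset.sum_congr rfl
    intro j _
    rw [hvdef]
    dsimp only
    rw [RCLike.norm_conj]
  -- bound for the boundary q-integral
  have hQbound : ∀ n : ℕ,
      ‖lam n * (Complex.exp (lam n * t)
        * ∫ s in (0:ℝ)..t, Complex.exp (-lam n * s) * ⟪ψ n, B (d s)⟫)‖
      ≤ ζ * (r n * Sd) := by
    intro n
    have hb1 := hbase n _ (hqcont n)
    have hρn : (0:ℝ) < -(lam n).re := by linarith [hρneg n]
    have hintle : (∫ s in (0:ℝ)..t, Real.exp ((lam n).re * (t - s)) * ‖⟪ψ n, B (d s)⟫‖)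
        ≤ (r n * Sd) * ∫ s in (0:ℝ)..t, Real.exp ((lam n).re * (t - s)) := by
      rw [← intervalIntegral.integral_const_mul]
      apply intervalIntegral.integral_mono_on ht0
      · apply ContinuousOn.intervalIntegrable
        rw [hucc]
        exact ((Real.continuous_exp.comp (continuous_const.mul
          (continuous_const.sub continuous_id))).continuousOn).mul (hqcont n).norm
      · apply ContinuousOn.intervalIntegrable
        rw [hucc]
        exact continuousOn_const.mul ((Real.continuous_exp.comp (continuous_const.mul
          (continuous_const.sub continuous_id))).continuousOn)
      · intro s hs
        have h2 : ‖⟪ψ n, B (d s)⟫‖ ≤ r n * Sd :=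
          le_trans (hqr n s) (mul_le_mul_of_nonneg_left (hSdmem s hs) (hr0 n))
        calc Real.exp ((lam n).re * (t - s)) * ‖⟪ψ n, B (d s)⟫‖
            ≤ Real.exp ((lam n).re * (t - s)) * (r n * Sd) :=
              mul_le_mul_of_nonneg_left h2 (Real.exp_pos _).le
          _ = (r n * Sd) * Real.exp ((lam n).re * (t - s)) := by ring
    have hint3 : (∫ s in (0:ℝ)..t, Real.exp ((lam n).re * (t - s))) ≤ 1/(-(lam n).re) :=
      exp_integral_le hρn (by linarith) ht0
    have hfrac : ‖lam n‖ * (1/(-(lam n).re)) ≤ ζ := by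
      rw [mul_one_div]
      exact (div_le_iff₀ hρn).mpr (hζn n)
    have hint0 : 0 ≤ ∫ s in (0:ℝ)..t, Real.exp ((lam n).re * (t - s)) :=
      intervalIntegral.integral_nonneg ht0 (fun s _ => (Real.exp_pos _).le)
    rw [norm_mul]
    calc ‖lam n‖ * ‖Complex.exp (lam n * t)
          * ∫ s in (0:ℝ)..t, Complex.exp (-lam n * s) * ⟪ψ n, B (d s)⟫‖
        ≤ ‖lam n‖
          * ((r n * Sd) * ∫ s in (0:ℝ)..t, Real.exp ((lam n).re * (t - s))) :=
          mul_le_mul_of_nonneg_left (le_trans hb1 hintle) (norm_nonneg _)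
      _ = (‖lam n‖ * ∫ s in (0:ℝ)..t, Real.exp ((lam n).re * (t - s)))
          * (r n * Sd) := by ring
      _ ≤ (‖lam n‖ * (1/(-(lam n).re))) * (r n * Sd) := by
          apply mul_le_mul_of_nonneg_right _ (mul_nonneg (hr0 n) hSd0)
          exact mul_le_mul_of_nonneg_left hint3 (norm_nonneg _)
      _ ≤ ζ * (r n * Sd) :=
          mul_le_mul_of_nonneg_right hfrac (mul_nonneg (hr0 n) hSd0)
  -- bound for the initial-condition term
  have hEbound : ∀ n : ℕ, ‖Complex.exp (lam n * t) * ⟪ψ n, X 0⟫‖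
      ≤ Real.exp (ω0 * t) * ‖⟪ψ n, X 0⟫‖ := by
    intro n
    rw [norm_mul, hexpre]
    exact mul_le_mul_of_nonneg_right
      (Real.exp_le_exp.2 (mul_le_mul_of_nonneg_right (hρle n) ht0)) (norm_nonneg _)
  -- coefficient sum bounds from the Riesz lower bound
  have hcb := coeff_bound φ ψ mR hmR.le hRieszLower hexpansion
  have hcoeffX0 : ∀ N : ℕ, ∑ n ∈ Finset.range N, ‖⟪ψ n, X 0⟫‖ ^ 2 ≤ ‖X0‖ ^ 2 / mR := by
    intro N
    have h1 := hcb (Finset.range N) (X 0)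
    rw [show ‖X 0‖ = ‖X0‖ by rw [hX00]] at h1
    refine (le_div_iff₀ hmR).mpr ?_
    rw [mul_comm]
    exact h1
  have hWub : ∀ s ∈ Set.Icc (0:ℝ) t, ‖ABL (d s) + U s‖ ≤ CAB * Sd + SU := by
    intro s hs
    refine le_trans (norm_add_le _ _) ?_
    have h3 : ‖ABL (d s)‖ ≤ CAB * ‖d s‖ := ABL.le_opNorm _
    have h4 := hSdmem s hs
    have h5 := hSUmem s hs
    nlinarith
  have hcoeffW : ∀ N : ℕ, ∀ s ∈ Set.Icc (0:ℝ) t,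
      ∑ n ∈ Finset.range N, ‖⟪ψ n, ABL (d s) + U s⟫‖ ^ 2
        ≤ (CAB * Sd + SU) ^ 2 / mR := by
    intro N s hs
    have h1 := hcb (Finset.range N) (ABL (d s) + U s)
    have h2 : ‖ABL (d s) + U s‖ ^ 2 ≤ (CAB * Sd + SU) ^ 2 :=
      pow_le_pow_left₀ (norm_nonneg _) (hWub s hs) 2
    refine (le_div_iff₀ hmR).mpr ?_
    rw [mul_comm]
    exact le_trans h1 h2
  have hcoeffB : ∀ (N : ℕ) (j : Fin m),
      ∑ n ∈ Finset.range N, ‖⟪ψ n, B (EuclideanSpace.single j (1:ℂ))⟫‖ ^ 2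
        ≤ ‖B (EuclideanSpace.single j (1:ℂ))‖ ^ 2 / mR := by
    intro N j
    have h1 := hcb (Finset.range N) (B (EuclideanSpace.single j (1:ℂ)))
    refine (le_div_iff₀ hmR).mpr ?_
    rw [mul_comm]
    exact h1
  -- the three constants of the estimate
  obtain ⟨α, hαdef⟩ : ∃ α : ℝ, α = Real.exp (ω0 * t) * ‖X0‖ / Real.sqrt mR := ⟨_, rfl⟩
  obtain ⟨β, hβdef⟩ : ∃ β : ℝ, β = (CAB * Sd + SU) / ((-ω0) * Real.sqrt mR) := ⟨_, rfl⟩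
  obtain ⟨γ, hγdef⟩ : ∃ γ : ℝ, γ = ζ * KB * Sd / Real.sqrt mR := ⟨_, rfl⟩
  have hα0 : 0 ≤ α := by
    rw [hαdef]
    exact div_nonneg (mul_nonneg (Real.exp_pos _).le (norm_nonneg _)) hsmR.le
  have hβ0 : 0 ≤ β := by
    rw [hβdef]
    exact div_nonneg (add_nonneg (mul_nonneg hCAB0 hSd0) hSU0)
      (mul_nonneg hκ0.le hsmR.le)
  have hγ0 : 0 ≤ γ := by
    rw [hγdef]
    exact div_nonneg (mul_nonneg (mul_nonneg hζ0 hKB0) hSd0) hsmR.le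
  -- the square norms of partial coefficient sums
  have hsumN : ∀ N : ℕ, ∑ n ∈ Finset.range N, ‖⟪ψ n, X t⟫‖ ^ 2 ≤ (α + β + γ) ^ 2 := by
    intro N
    obtain ⟨vE, hvE⟩ : ∃ v : EuclideanSpace ℂ (Fin N), v =
      fun i : Fin N => Complex.exp (lam i * t) * ⟪ψ (i:ℕ), X 0⟫ := ⟨WithLp.toLp 2 _, rfl⟩
    obtain ⟨vI, hvI⟩ : ∃ v : EuclideanSpace ℂ (Fin N), v =
      fun i : Fin N => Complex.exp (lam i * t)
        * ∫ s in (0:ℝ)..t, Complex.exp (-lam i * s) * ⟪ψ (i:ℕ), ABL (d s) + U s⟫ := ⟨WithLp.toLp 2 _, rfl⟩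
    obtain ⟨vQ, hvQ⟩ : ∃ v : EuclideanSpace ℂ (Fin N), v =
      fun i : Fin N => lam i * (Complex.exp (lam i * t)
        * ∫ s in (0:ℝ)..t, Complex.exp (-lam i * s) * ⟪ψ (i:ℕ), B (d s)⟫) := ⟨WithLp.toLp 2 _, rfl⟩
    have hnormsq : ∀ u : EuclideanSpace ℂ (Fin N), ‖u‖ ^ 2 = ∑ i : Fin N, ‖u i‖ ^ 2 := by
      intro u
      rw [EuclideanSpace.norm_eq]
      exact Real.sq_sqrt (Finset.sum_nonneg fun i _ => sq_nonneg _)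
    have hEq : ∑ n ∈ Finset.range N, ‖⟪ψ n, X t⟫‖ ^ 2 = ‖vE + vI - vQ‖ ^ 2 := by
      rw [hnormsq, ← Fin.sum_univ_eq_sum_range (fun n => ‖⟪ψ n, X t⟫‖ ^ 2) N]
      apply Finset.sum_congr rfl
      intro i _
      have happ : (vE + vI - vQ) i = vE i + vI i - vQ i := rfl
      rw [happ, hvE, hvI, hvQ]
      dsimp only
      rw [← hkey i]
    have hnE : ‖vE‖ ≤ α := by
      refine le_of_sq_le_sq' (norm_nonneg _) hα0 ?_
      rw [hnormsq]
      have h1 : ∀ i : Fin N, ‖vE i‖ ^ 2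
          ≤ Real.exp (ω0 * t) ^ 2 * ‖⟪ψ (i:ℕ), X 0⟫‖ ^ 2 := by
        intro i
        rw [hvE]
        dsimp only
        calc ‖Complex.exp (lam i * t) * ⟪ψ (i:ℕ), X 0⟫‖ ^ 2
            ≤ (Real.exp (ω0 * t) * ‖⟪ψ (i:ℕ), X 0⟫‖) ^ 2 :=
              pow_le_pow_left₀ (norm_nonneg _) (hEbound i) 2
          _ = Real.exp (ω0 * t) ^ 2 * ‖⟪ψ (i:ℕ), X 0⟫‖ ^ 2 := by ring
      calc ∑ i : Fin N, ‖vE i‖ ^ 2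
          ≤ ∑ i : Fin N, Real.exp (ω0 * t) ^ 2 * ‖⟪ψ (i:ℕ), X 0⟫‖ ^ 2 :=
            Finset.sum_le_sum fun i _ => h1 i
        _ = Real.exp (ω0 * t) ^ 2 * ∑ n ∈ Finset.range N, ‖⟪ψ n, X 0⟫‖ ^ 2 := by
            rw [← Finset.mul_sum, Fin.sum_univ_eq_sum_range (fun n => ‖⟪ψ n, X 0⟫‖ ^ 2) N]
        _ ≤ Real.exp (ω0 * t) ^ 2 * (‖X0‖ ^ 2 / mR) :=
            mul_le_mul_of_nonneg_left (hcoeffX0 N) (by positivity)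
        _ = α ^ 2 := by
            rw [hαdef, div_pow, Real.sq_sqrt hmR.le]
            ring
    have hnI : ‖vI‖ ≤ β := by
      refine le_of_sq_le_sq' (norm_nonneg _) hβ0 ?_
      rw [hnormsq]
      have hexpω : Continuous (fun s : ℝ => Real.exp (ω0 * (t - s))) :=
        Real.continuous_exp.comp (continuous_const.mul (continuous_const.sub continuous_id))
      have hint_each : ∀ n : ℕ, IntervalIntegrable
          (fun s => Real.exp (ω0 * (t - s)) * ‖⟪ψ n, ABL (d s) + U s⟫‖ ^ 2) volume 0 t := by
        intro n
        apply ContinuousOn.intervalIntegrable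
        rw [hucc]
        exact (hexpω.continuousOn).mul (((hwcont n).norm).pow 2)
      calc ∑ i : Fin N, ‖vI i‖ ^ 2
          ≤ ∑ i : Fin N, (1/(-ω0)) * ∫ s in (0:ℝ)..t,
              Real.exp (ω0 * (t - s)) * ‖⟪ψ (i:ℕ), ABL (d s) + U s⟫‖ ^ 2 := by
            refine Finset.sum_le_sum fun i _ => ?_
            rw [hvI]
            dsimp only
            exact hIbound i
        _ = (1/(-ω0)) * ∑ n ∈ Finset.range N, ∫ s in (0:ℝ)..t,
              Real.exp (ω0 * (t - s)) * ‖⟪ψ n, ABL (d s) + U s⟫‖ ^ 2 := by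
            rw [← Finset.mul_sum, Fin.sum_univ_eq_sum_range (fun n => ∫ s in (0:ℝ)..t,
              Real.exp (ω0 * (t - s)) * ‖⟪ψ n, ABL (d s) + U s⟫‖ ^ 2) N]
        _ = (1/(-ω0)) * ∫ s in (0:ℝ)..t, ∑ n ∈ Finset.range N,
              Real.exp (ω0 * (t - s)) * ‖⟪ψ n, ABL (d s) + U s⟫‖ ^ 2 := by
            rw [intervalIntegral.integral_finset_sum (fun n _ => hint_each n)]
        _ ≤ (1/(-ω0)) * ∫ s in (0:ℝ)..t,
              ((CAB * Sd + SU) ^ 2 / mR) * Real.exp (ω0 * (t - s)) := by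
            apply mul_le_mul_of_nonneg_left _ (by positivity)
            apply intervalIntegral.integral_mono_on ht0
            · apply ContinuousOn.intervalIntegrable
              rw [hucc]
              apply continuousOn_finset_sum
              intro n _
              exact (hexpω.continuousOn).mul (((hwcont n).norm).pow 2)
            · apply ContinuousOn.intervalIntegrable
              rw [hucc]
              exact continuousOn_const.mul hexpω.continuousOn
            · intro s hs
              calc ∑ n ∈ Finset.range N,
                    Real.exp (ω0 * (t - s)) * ‖⟪ψ n, ABL (d s) + U s⟫‖ ^ 2
                  = Real.exp (ω0 * (t - s)) * ∑ n ∈ Finset.range N,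
                    ‖⟪ψ n, ABL (d s) + U s⟫‖ ^ 2 := by rw [Finset.mul_sum]
                _ ≤ Real.exp (ω0 * (t - s)) * ((CAB * Sd + SU) ^ 2 / mR) :=
                    mul_le_mul_of_nonneg_left (hcoeffW N s hs) (Real.exp_pos _).le
                _ = ((CAB * Sd + SU) ^ 2 / mR) * Real.exp (ω0 * (t - s)) := by ring
        _ = (1/(-ω0)) * (((CAB * Sd + SU) ^ 2 / mR)
              * ∫ s in (0:ℝ)..t, Real.exp (ω0 * (t - s))) := by
            rw [intervalIntegral.integral_const_mul]
        _ ≤ (1/(-ω0)) * (((CAB * Sd + SU) ^ 2 / mR) * (1/(-ω0))) := by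
            apply mul_le_mul_of_nonneg_left _ (by positivity)
            exact mul_le_mul_of_nonneg_left
              (exp_integral_le hκ0 (by linarith) ht0) (by positivity)
        _ = β ^ 2 := by
            rw [hβdef, div_pow, mul_pow, Real.sq_sqrt hmR.le]
            field_simp
    have hnQ : ‖vQ‖ ≤ γ := by
      refine le_of_sq_le_sq' (norm_nonneg _) hγ0 ?_
      rw [hnormsq]
      calc ∑ i : Fin N, ‖vQ i‖ ^ 2
          ≤ ∑ i : Fin N, (ζ ^ 2 * Sd ^ 2) * r (i:ℕ) ^ 2 := by
            refine Finset.sum_le_sum fun i _ => ?_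
            rw [hvQ]
            dsimp only
            calc ‖lam i * (Complex.exp (lam i * t)
                  * ∫ s in (0:ℝ)..t, Complex.exp (-lam i * s) * ⟪ψ (i:ℕ), B (d s)⟫)‖ ^ 2
                ≤ (ζ * (r (i:ℕ) * Sd)) ^ 2 :=
                  pow_le_pow_left₀ (norm_nonneg _) (hQbound i) 2
              _ = (ζ ^ 2 * Sd ^ 2) * r (i:ℕ) ^ 2 := by ring
        _ = (ζ ^ 2 * Sd ^ 2) * ∑ n ∈ Finset.range N, r n ^ 2 := by
            rw [← Finset.mul_sum, Fin.sum_univ_eq_sum_range (fun n => r n ^ 2) N]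
        _ ≤ (ζ ^ 2 * Sd ^ 2) * (KB ^ 2 / mR) := by
            apply mul_le_mul_of_nonneg_left _ (by positivity)
            calc ∑ n ∈ Finset.range N, r n ^ 2
                = ∑ n ∈ Finset.range N, ∑ j : Fin m,
                    ‖⟪ψ n, B (EuclideanSpace.single j (1:ℂ))⟫‖ ^ 2 :=
                  Finset.sum_congr rfl fun n _ => hrsq n
              _ = ∑ j : Fin m, ∑ n ∈ Finset.range N,
                    ‖⟪ψ n, B (EuclideanSpace.single j (1:ℂ))⟫‖ ^ 2 := Finset.sum_comm
              _ ≤ ∑ j : Fin m, ‖B (EuclideanSpace.single j (1:ℂ))‖ ^ 2 / mR :=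
                  Finset.sum_le_sum fun j _ => hcoeffB N j
              _ = KB ^ 2 / mR := by rw [hKBsq, Finset.sum_div]
        _ = γ ^ 2 := by
            rw [hγdef, div_pow, Real.sq_sqrt hmR.le]
            ring
    rw [hEq]
    have htri : ‖vE + vI - vQ‖ ≤ α + β + γ := by
      calc ‖vE + vI - vQ‖ ≤ ‖vE + vI‖ + ‖vQ‖ := norm_sub_le _ _
        _ ≤ ‖vE‖ + ‖vI‖ + ‖vQ‖ := by
            have := norm_add_le vE vI
            linarith
        _ ≤ α + β + γ := by linarith
    exact pow_le_pow_left₀ (norm_nonneg _) htri 2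
  -- pass to the limit
  have hXt : ‖X t‖ ≤ Real.sqrt MR * (α + β + γ) := by
    have hsum0 : 0 ≤ α + β + γ := by linarith
    refine le_of_tendsto ((hexpansion (X t)).norm) (Filter.Eventually.of_forall fun N => ?_)
    have h1 := hRieszUpper (Finset.range N) (fun n => ⟪ψ n, X t⟫)
    have h2 : ‖∑ n ∈ Finset.range N, ⟪ψ n, X t⟫ • φ n‖ ^ 2 ≤ MR * (α + β + γ) ^ 2 :=
      le_trans h1 (mul_le_mul_of_nonneg_left (hsumN N) hMR0.le)
    refine le_of_sq_le_sq' (norm_nonneg _) (mul_nonneg (Real.sqrt_nonneg _) hsum0) ?_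
    rw [mul_pow, Real.sq_sqrt hMR0.le]
    exact h2
  -- final arithmetic
  have hexpand : Real.sqrt MR * (α + β + γ)
      = R * (Real.exp (ω0 * t) * ‖X0‖) + (R * (CAB / (-ω0) + ζ * KB)) * Sd
        + (R / (-ω0)) * SU := by
    rw [hαdef, hβdef, hγdef, hRdef]
    have hω0ne : ω0 ≠ 0 := ne_of_lt hω0neg
    field_simp
    ring
  refine le_trans hXt ?_
  rw [hexpand]
  have hE0 : 0 ≤ Real.exp (ω0 * t) * ‖X0‖ :=
    mul_nonneg (Real.exp_pos _).le (norm_nonneg _)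
  nlinarith [hE0, hSd0, hSU0]
end
end

section
/- Let λ ∈ ℂ and let ψ ∈ D(𝒜₀*) satisfy 𝒜₀* ψ = conj(λ) ψ. Let X be a classical solution associated with (X₀, d, U). Then the function c(t) := ⟨X(t), ψ⟩ is continuously differentiable on [0,∞) and satisfies, for every t ≥ 0, c′(t) = λ c(t) − λ ⟨B d(t), ψ⟩ + ⟨𝒜 B d(t), ψ⟩ + ⟨U(t), ψ⟩. -/
noncomputable section

local notation "⟪" x ", " y "⟫" => @inner ℂ _ _ x y

/-- Spectral decomposition of classical solutions: the coefficient `c(t) = ⟨X(t), ψ⟩`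
satisfies the ODE `c' = λ c - λ ⟨B d, ψ⟩ + ⟨A B d, ψ⟩ + ⟨U, ψ⟩`, and is continuously
differentiable. -/
theorem statement_3 {H : Type*} [NormedAddCommGroup H] [InnerProductSpace ℂ H] [CompleteSpace H]
    [TopologicalSpace.SeparableSpace H]
    {m : ℕ} (hm : 0 < m)
    (domA : Set H) (A : H → H) (Bop : H → EuclideanSpace ℂ (Fin m))
    (hdomA : ∀ x ∈ domA, ∀ y ∈ domA, ∀ a b : ℂ, a • x + b • y ∈ domA)
    (hAlin : IsLinearOn A domA) (hBoplin : IsLinearOn Bop domA)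
    (domAstar : Set H) (Astar : H → H)
    (hdense : Dense {x : H | x ∈ domA ∧ Bop x = 0})
    (hadjdom : ∀ z : H, z ∈ domAstar ↔ ∃ w : H, ∀ x ∈ domA, Bop x = 0 → ⟪w, x⟫ = ⟪z, A x⟫)
    (hadj : ∀ z ∈ domAstar, ∀ x ∈ domA, Bop x = 0 → ⟪Astar z, x⟫ = ⟪z, A x⟫)
    (B : EuclideanSpace ℂ (Fin m) →L[ℂ] H)
    (hBdom : ∀ v, B v ∈ domA) (hBlift : ∀ v, Bop (B v) = v)
    (hABcont : Continuous fun v => A (B v))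
    (lam : ℂ) (ψ : H) (hψmem : ψ ∈ domAstar) (heigstar : Astar ψ = (starRingEnd ℂ) lam • ψ)
    (X0 : H) (d : ℝ → EuclideanSpace ℂ (Fin m)) (U : ℝ → H) (X : ℝ → H)
    (hX0 : X0 ∈ domA) (hd : ContinuousOn d (Set.Ici 0)) (hU : ContinuousOn U (Set.Ici 0))
    (hcomp : Bop X0 = d 0)
    (hX : IsClassicalSolution A Bop domA X0 d U X) :
    (∀ t ∈ Set.Ici (0:ℝ),
      HasDerivWithinAt (fun s => ⟪ψ, X s⟫)
        (lam * ⟪ψ, X t⟫ - lam * ⟪ψ, B (d t)⟫ + ⟪ψ, A (B (d t))⟫ + ⟪ψ, U t⟫)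
        (Set.Ici 0) t) ∧
    ContinuousOn
      (fun t => lam * ⟪ψ, X t⟫ - lam * ⟪ψ, B (d t)⟫ + ⟪ψ, A (B (d t))⟫ + ⟪ψ, U t⟫)
      (Set.Ici 0) := by
  obtain ⟨hXcont, hXdom, hAXcont, hXderiv, hX0eq, hBX⟩ := hX
  have key : ∀ t ∈ Set.Ici (0:ℝ),
      ⟪ψ, A (X t)⟫ = lam * ⟪ψ, X t⟫ - lam * ⟪ψ, B (d t)⟫ + ⟪ψ, A (B (d t))⟫ := by
    intro t ht
    set y := X t - B (d t) with hy
    have hymem : y ∈ domA := by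
      have := hdomA (X t) (hXdom t ht) (B (d t)) (hBdom (d t)) 1 (-1)
      simpa [hy, sub_eq_add_neg] using this
    have hsum : y + B (d t) = X t := by simp [hy]
    have hBy : Bop y = 0 := by
      have hadd := hBoplin.1 y hymem (B (d t)) (hBdom (d t))
      rw [hsum, hBX t ht, hBlift] at hadd
      exact right_eq_add.mp hadd
    have hAy : ⟪ψ, A y⟫ = lam * ⟪ψ, y⟫ := by
      have h := hadj ψ hψmem y hymem hBy
      rw [heigstar, inner_smul_left, Complex.conj_conj] at h
      exact h.symm
    have hAX : A (X t) = A y + A (B (d t)) := by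
      rw [← hsum]; exact hAlin.1 y hymem (B (d t)) (hBdom (d t))
    rw [hAX, inner_add_right, hAy, hy, inner_sub_right]
    ring
  have hderiv : ∀ t ∈ Set.Ici (0:ℝ), HasDerivWithinAt (fun s => ⟪ψ, X s⟫)
      (⟪ψ, A (X t) + U t⟫) (Set.Ici 0) t := fun t ht => by
    exact
      ((((innerSL ℂ ψ).restrictScalars ℝ).hasFDerivAt (x := X t)).comp_hasDerivWithinAt t (hXderiv t ht))
  constructor
  · intro t ht
    have h := hderiv t ht
    rwa [inner_add_right, key t ht] at h
  · apply ContinuousOn.add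
    apply ContinuousOn.add
    apply ContinuousOn.sub
    · exact continuousOn_const.mul
        ((innerSL ℂ ψ).continuous.comp_continuousOn hXcont)
    · exact continuousOn_const.mul
        ((innerSL ℂ ψ).continuous.comp_continuousOn (B.continuous.comp_continuousOn hd))
    · exact ((innerSL ℂ ψ).continuous.comp hABcont).comp_continuousOn hd
    · exact (innerSL ℂ ψ).continuous.comp_continuousOn hU
end
end

section
/- Let H be a complex Hilbert space, let (φ_n)_{n∈ℕ} be a sequence in H for which there are constants 0 < m_R ≤ M_R with m_R Σ|a_n|² ≤ ‖Σ a_n φ_n‖² ≤ M_R Σ|a_n|² for every finitely supported family (a_n) of complex numbers, and let (ψ_n)_{n∈ℕ} be a sequence in H such that every x ∈ H has the norm-convergent expansion x = Σ_{n∈ℕ} ⟨x, ψ_n⟩ φ_n. Let κ₀ > 0, let (λ_n)_{n∈ℕ} be complex numbers with Re λ_n ≤ −κ₀ for all n, let t ≥ 0 and let F : [0,t] → H be continuous. Then the series Σ_{n∈ℕ} ( ∫₀ᵗ e^{λ_n (t−τ)} ⟨F(τ), ψ_n⟩ dτ ) φ_n converges in H and its norm is at most (1/κ₀) · √(M_R/m_R)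 · sup_{τ∈[0,t]} ‖F(τ)‖. -/
noncomputable section

local notation "⟪" x ", " y "⟫" => @inner ℂ _ _ x y

open intervalIntegral MeasureTheory

lemma my_cs {t : ℝ} (ht : 0 ≤ t) {f g : ℝ → ℝ}
    (hf : ContinuousOn f (Set.Icc 0 t)) (hg : ContinuousOn g (Set.Icc 0 t)) :
    (∫ τ in (0:ℝ)..t, f τ * g τ) ^ 2 ≤
      (∫ τ in (0:ℝ)..t, f τ ^ 2) * (∫ τ in (0:ℝ)..t, g τ ^ 2) := by
  have hI : Set.uIcc (0:ℝ) t = Set.Icc 0 t := Set.uIcc_of_le ht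
  have hfu : ContinuousOn f (Set.uIcc 0 t) := hI ▸ hf
  have hgu : ContinuousOn g (Set.uIcc 0 t) := hI ▸ hg
  have hff : IntervalIntegrable (fun τ => f τ ^ 2) volume 0 t :=
    (hfu.pow 2).intervalIntegrable
  have hgg : IntervalIntegrable (fun τ => g τ ^ 2) volume 0 t :=
    (hgu.pow 2).intervalIntegrable
  have hfg : IntervalIntegrable (fun τ => f τ * g τ) volume 0 t :=
    (hfu.mul hgu).intervalIntegrable
  have key : ∀ x : ℝ, 0 ≤ (∫ τ in (0:ℝ)..t, g τ ^ 2) * (x * x) +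
      (2 * ∫ τ in (0:ℝ)..t, f τ * g τ) * x + (∫ τ in (0:ℝ)..t, f τ ^ 2) := by
    intro x
    have h1 : (∫ τ in (0:ℝ)..t, g τ ^ 2) * (x * x) +
        (2 * ∫ τ in (0:ℝ)..t, f τ * g τ) * x + (∫ τ in (0:ℝ)..t, f τ ^ 2)
        = ∫ τ in (0:ℝ)..t, (f τ + x * g τ) ^ 2 := by
      have : (fun τ => (f τ + x * g τ) ^ 2) =
          fun τ => f τ ^ 2 + (2 * x) * (f τ * g τ) + (x * x) * g τ ^ 2 := by
        funext τ; ring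
      rw [this]
      rw [intervalIntegral.integral_add (hff.add ((hfg.const_mul _))) (hgg.const_mul _),
        intervalIntegral.integral_add hff (hfg.const_mul _),
        intervalIntegral.integral_const_mul, intervalIntegral.integral_const_mul]
      ring
    rw [h1]
    exact intervalIntegral.integral_nonneg ht (fun u _ => sq_nonneg _)
  have := discrim_le_zero key
  rw [discrim] at this
  nlinarith [this]

lemma my_expint {t κ0 : ℝ} (hκ0 : 0 < κ0) :
    ∫ τ in (0:ℝ)..t, Real.exp (-κ0 * (t - τ)) ≤ 1 / κ0 := by
  have hderiv : ∀ x ∈ Set.uIcc (0:ℝ) t,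
      HasDerivAt (fun τ => Real.exp (-κ0 * (t - τ)) / κ0) (Real.exp (-κ0 * (t - x))) x := by
    intro x _
    have h1 : HasDerivAt (fun τ : ℝ => -κ0 * (t - τ)) κ0 x := by
      have := ((hasDerivAt_id x).const_sub t).const_mul (-κ0)
      simpa using this
    have h2 := (Real.hasDerivAt_exp (-κ0 * (t - x))).comp x h1
    have h3 := h2.div_const κ0
    have he : Real.exp (-(κ0 * (t - x))) * κ0 / κ0 = Real.exp (-(κ0 * (t - x))) := by
      field_simp
    simpa [he] using h3
  have hint : IntervalIntegrable (fun τ => Real.exp (-κ0 * (t - τ))) volume 0 t :=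
    (Continuous.intervalIntegrable (by continuity) 0 t)
  have := intervalIntegral.integral_eq_sub_of_hasDerivAt hderiv hint
  rw [this]
  have he1 : Real.exp (-κ0 * (t - t)) = 1 := by simp
  have he2 := Real.exp_pos (-κ0 * (t - 0))
  rw [he1, div_sub_div_same]
  gcongr
  linarith

lemma my_cs2 {t : ℝ} (ht : 0 ≤ t) {w g : ℝ → ℝ} (hw : ∀ τ, 0 ≤ w τ)
    (hwc : Continuous w) (hg : ContinuousOn g (Set.Icc 0 t)) :
    (∫ τ in (0:ℝ)..t, w τ * g τ) ^ 2 ≤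
      (∫ τ in (0:ℝ)..t, w τ) * ∫ τ in (0:ℝ)..t, w τ * g τ ^ 2 := by
  have hsq : ContinuousOn (fun τ => Real.sqrt (w τ)) (Set.Icc 0 t) :=
    (Real.continuous_sqrt.comp hwc).continuousOn
  have h := my_cs ht (f := fun τ => Real.sqrt (w τ))
    (g := fun τ => Real.sqrt (w τ) * g τ) hsq (hsq.mul hg)
  have e1 : (fun τ => Real.sqrt (w τ) * (Real.sqrt (w τ) * g τ)) = fun τ => w τ * g τ :=
    funext fun τ => by rw [← mul_assoc, Real.mul_self_sqrt (hw τ)]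
  have e2 : (fun τ => Real.sqrt (w τ) ^ 2) = w :=
    funext fun τ => Real.sq_sqrt (hw τ)
  have e3 : (fun τ => (Real.sqrt (w τ) * g τ) ^ 2) = fun τ => w τ * g τ ^ 2 :=
    funext fun τ => by rw [mul_pow, Real.sq_sqrt (hw τ)]
  rw [e1, e2, e3] at h
  exact h

/-- The series `∑ f n` converges in norm to `x`. -/
def SeriesHasSum {H : Type*} [AddCommMonoid H] [TopologicalSpace H] (f : ℕ → H) (x : H) : Prop :=
  Filter.Tendsto (fun N => ∑ n ∈ Finset.range N, f n) Filter.atTop (nhds x)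

set_option maxHeartbeats 2000000 in
/-- Estimate on the convolution term of the spectral decomposition. -/
theorem statement_6 {H : Type*} [NormedAddCommGroup H] [InnerProductSpace ℂ H] [CompleteSpace H]
    (φ ψ : ℕ → H) (mR MR : ℝ) (hmR : 0 < mR) (hmRMR : mR ≤ MR)
    (hRieszLower : ∀ (s : Finset ℕ) (a : ℕ → ℂ),
      mR * ∑ n ∈ s, ‖a n‖ ^ 2 ≤ ‖∑ n ∈ s, a n • φ n‖ ^ 2)
    (hRieszUpper : ∀ (s : Finset ℕ) (a : ℕ → ℂ),
      ‖∑ n ∈ s, a n • φ n‖ ^ 2 ≤ MR * ∑ n ∈ s, ‖a n‖ ^ 2)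
    (hexpansion : ∀ x : H,
      Filter.Tendsto (fun N => ∑ n ∈ Finset.range N, ⟪ψ n, x⟫ • φ n) Filter.atTop (nhds x))
    (κ0 : ℝ) (hκ0 : 0 < κ0) (lam : ℕ → ℂ) (hlam : ∀ n, (lam n).re ≤ -κ0)
    (t : ℝ) (ht : 0 ≤ t) (F : ℝ → H) (hF : ContinuousOn F (Set.Icc 0 t)) :
    ∃ g : H,
      SeriesHasSum (fun n =>
        (∫ τ in (0:ℝ)..t, Complex.exp (lam n * ((t:ℂ) - (τ:ℂ))) * ⟪ψ n, F τ⟫) • φ n) g ∧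
      ‖g‖ ≤ (1 / κ0) * Real.sqrt (MR / mR) * sSup ((fun τ => ‖F τ‖) '' Set.Icc 0 t) := by
  classical
  set S : ℝ := sSup ((fun τ => ‖F τ‖) '' Set.Icc 0 t) with hS
  have hI : Set.uIcc (0:ℝ) t = Set.Icc 0 t := Set.uIcc_of_le ht
  -- bound on sup
  have hbdd : BddAbove ((fun τ => ‖F τ‖) '' Set.Icc 0 t) :=
    (isCompact_Icc.image_of_continuousOn hF.norm).bddAbove
  have hFS : ∀ τ ∈ Set.Icc (0:ℝ) t, ‖F τ‖ ≤ S := fun τ hτ =>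
    le_csSup hbdd ⟨τ, hτ, rfl⟩
  have hS0 : 0 ≤ S := le_trans (norm_nonneg (F 0)) (hFS 0 ⟨le_refl 0, ht⟩)
  -- notation
  set w : ℝ → ℝ := fun τ => Real.exp (-κ0 * (t - τ)) with hwdef
  have hw0 : ∀ τ, 0 ≤ w τ := fun τ => (Real.exp_pos _).le
  have hwc : Continuous w := by continuity
  have hwint : IntervalIntegrable w volume 0 t := hwc.intervalIntegrable 0 t
  have hwI : ∫ τ in (0:ℝ)..t, w τ ≤ 1 / κ0 := my_expint hκ0
  have hwI0 : 0 ≤ ∫ τ in (0:ℝ)..t, w τ :=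
    intervalIntegral.integral_nonneg ht (fun u _ => hw0 u)
  set c : ℕ → ℂ := fun n => ∫ τ in (0:ℝ)..t, Complex.exp (lam n * ((t:ℂ) - (τ:ℂ))) * ⟪ψ n, F τ⟫
    with hcdef
  set G : ℕ → ℝ → ℝ := fun n τ => ‖(⟪ψ n, F τ⟫ : ℂ)‖ with hGdef
  have hinnercont : ∀ n, ContinuousOn (fun τ => (⟪ψ n, F τ⟫ : ℂ)) (Set.Icc 0 t) :=
    fun n => continuousOn_const.inner hF
  have hGcont : ∀ n, ContinuousOn (G n) (Set.Icc 0 t) := fun n => (hinnercont n).norm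
  -- exp bound
  have hexpb : ∀ n, ∀ τ ∈ Set.Icc (0:ℝ) t,
      ‖Complex.exp (lam n * ((t:ℂ) - (τ:ℂ)))‖ ≤ w τ := by
    intro n τ hτ
    have h1 : ‖Complex.exp (lam n * ((t:ℂ) - (τ:ℂ)))‖ =
        Real.exp ((lam n * ((t:ℂ) - (τ:ℂ))).re) := Complex.norm_exp _
    have h2 : (lam n * ((t:ℂ) - (τ:ℂ))).re = (lam n).re * (t - τ) := by
      simp [Complex.mul_re, Complex.sub_re, Complex.sub_im]
    rw [h1, h2, hwdef]
    apply Real.exp_le_exp.mpr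
    have htτ : 0 ≤ t - τ := by linarith [hτ.2]
    exact mul_le_mul_of_nonneg_right (hlam n) htτ
  -- |c n| ≤ ∫ w * G n
  have hcle : ∀ n, ‖c n‖ ≤ ∫ τ in (0:ℝ)..t, w τ * G n τ := by
    intro n
    have hicont : ContinuousOn (fun τ : ℝ => Complex.exp (lam n * ((t:ℂ) - (τ:ℂ))) * ⟪ψ n, F τ⟫)
        (Set.Icc 0 t) := by
      apply ContinuousOn.mul ?_ (hinnercont n)
      exact (Complex.continuous_exp.comp (by continuity)).continuousOn
    have hstep : ‖c n‖ ≤ ∫ τ in (0:ℝ)..t,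
        ‖(fun τ : ℝ => Complex.exp (lam n * ((t:ℂ) - (τ:ℂ))) * ⟪ψ n, F τ⟫) τ‖ :=
      intervalIntegral.norm_integral_le_integral_norm ht
    refine hstep.trans ?_
    · 
          apply intervalIntegral.integral_mono_on ht
          · exact (hI ▸ hicont.norm).intervalIntegrable
          · exact ((hI ▸ (hwc.continuousOn.mul (hGcont n))) :
              ContinuousOn _ (Set.uIcc 0 t)).intervalIntegrable
          · intro τ hτ
            rw [norm_mul]
            exact mul_le_mul_of_nonneg_right (hexpb n τ hτ) (norm_nonneg _)
  -- Bessel-type bound for ψ coefficients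
  have hpsi : ∀ (x : H) (N : ℕ),
      mR * ∑ n ∈ Finset.range N, ‖(⟪ψ n, x⟫ : ℂ)‖ ^ 2 ≤ ‖x‖ ^ 2 := by
    intro x N
    have htend : Filter.Tendsto (fun M => ‖∑ n ∈ Finset.range M, (⟪ψ n, x⟫ : ℂ) • φ n‖ ^ 2)
        Filter.atTop (nhds (‖x‖ ^ 2)) := ((hexpansion x).norm).pow 2
    apply ge_of_tendsto htend
    filter_upwards [Filter.eventually_ge_atTop N] with M hM
    calc mR * ∑ n ∈ Finset.range N, ‖(⟪ψ n, x⟫ : ℂ)‖ ^ 2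
        ≤ mR * ∑ n ∈ Finset.range M, ‖(⟪ψ n, x⟫ : ℂ)‖ ^ 2 := by
          apply mul_le_mul_of_nonneg_left ?_ hmR.le
          exact Finset.sum_le_sum_of_subset_of_nonneg
            (Finset.range_subset_range.mpr hM) (fun i _ _ => sq_nonneg _)
      _ ≤ ‖∑ n ∈ Finset.range M, (⟪ψ n, x⟫ : ℂ) • φ n‖ ^ 2 :=
          hRieszLower (Finset.range M) _
  -- partial sums of ‖c n‖² are bounded
  set B : ℝ := S ^ 2 / (mR * κ0 ^ 2) with hBdef
  have hsumb : ∀ N, ∑ n ∈ Finset.range N, ‖c n‖ ^ 2 ≤ B := by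
    intro N
    have step1 : ∀ n, ‖c n‖ ^ 2 ≤
        (∫ τ in (0:ℝ)..t, w τ) * ∫ τ in (0:ℝ)..t, w τ * G n τ ^ 2 := by
      intro n
      have h1 : ‖c n‖ ^ 2 ≤ (∫ τ in (0:ℝ)..t, w τ * G n τ) ^ 2 := by
        apply pow_le_pow_left₀ (norm_nonneg _) (hcle n)
      exact h1.trans (my_cs2 ht hw0 hwc (hGcont n))
    have hwGint : ∀ n, IntervalIntegrable (fun τ => w τ * G n τ ^ 2) volume 0 t := fun n =>
      ((hI ▸ (hwc.continuousOn.mul ((hGcont n).pow 2))) :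
        ContinuousOn _ (Set.uIcc 0 t)).intervalIntegrable
    calc ∑ n ∈ Finset.range N, ‖c n‖ ^ 2
        ≤ ∑ n ∈ Finset.range N,
            (∫ τ in (0:ℝ)..t, w τ) * ∫ τ in (0:ℝ)..t, w τ * G n τ ^ 2 :=
          Finset.sum_le_sum (fun n _ => step1 n)
      _ = (∫ τ in (0:ℝ)..t, w τ) *
            ∫ τ in (0:ℝ)..t, ∑ n ∈ Finset.range N, w τ * G n τ ^ 2 := by
          rw [intervalIntegral.integral_finset_sum (fun n _ => hwGint n),
            ← Finset.mul_sum]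
      _ ≤ (∫ τ in (0:ℝ)..t, w τ) * ∫ τ in (0:ℝ)..t, w τ * (S ^ 2 / mR) := by
          apply mul_le_mul_of_nonneg_left ?_ hwI0
          apply intervalIntegral.integral_mono_on ht
          · apply ContinuousOn.intervalIntegrable
            rw [hI]
            exact continuousOn_finset_sum _
              (fun n _ => hwc.continuousOn.mul ((hGcont n).pow 2))
          · exact ((hI ▸ (hwc.continuousOn.mul continuousOn_const)) :
              ContinuousOn _ (Set.uIcc 0 t)).intervalIntegrable
          · intro τ hτ
            rw [← Finset.mul_sum]
            apply mul_le_mul_of_nonneg_left ?_ (hw0 τ)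
            have h2 := hpsi (F τ) N
            have h3 : ‖F τ‖ ^ 2 ≤ S ^ 2 :=
              pow_le_pow_left₀ (norm_nonneg _) (hFS τ hτ) 2
            calc ∑ n ∈ Finset.range N, G n τ ^ 2 ≤ ‖F τ‖ ^ 2 / mR :=
                  (le_div_iff₀' hmR).mpr h2
              _ ≤ S ^ 2 / mR := by
                  exact div_le_div_of_nonneg_right h3 hmR.le
      _ = (∫ τ in (0:ℝ)..t, w τ) * ((∫ τ in (0:ℝ)..t, w τ) * (S ^ 2 / mR)) := by
          rw [intervalIntegral.integral_mul_const]
      _ ≤ (1 / κ0) * ((1 / κ0) * (S ^ 2 / mR)) := by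
          have hc : 0 ≤ S ^ 2 / mR := by positivity
          have h4 : (∫ τ in (0:ℝ)..t, w τ) * (S ^ 2 / mR) ≤ (1 / κ0) * (S ^ 2 / mR) :=
            mul_le_mul_of_nonneg_right hwI hc
          exact mul_le_mul hwI h4 (mul_nonneg hwI0 hc)
            (le_of_lt (by positivity))
      _ = B := by
          rw [hBdef]
          ring
  -- summability
  have hA : Summable (fun n => ‖c n‖ ^ 2) :=
    summable_of_sum_range_le (fun n => sq_nonneg _) hsumb
  have hT : ∑' n, ‖c n‖ ^ 2 ≤ B := Real.tsum_le_of_sum_range_le (fun n => sq_nonneg _) hsumb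
  set T : ℝ := ∑' n, ‖c n‖ ^ 2 with hTdef
  set P : ℕ → H := fun N => ∑ n ∈ Finset.range N, c n • φ n with hPdef
  -- tail bound
  have htail : ∀ N n m, N ≤ n → n ≤ m →
      ‖P m - P n‖ ^ 2 ≤ MR * (T - ∑ k ∈ Finset.range N, ‖c k‖ ^ 2) := by
    intro N n m hNn hnm
    have h1 : P m - P n = ∑ k ∈ Finset.Ico n m, c k • φ k := by
      rw [hPdef]
      exact (Finset.sum_Ico_eq_sub _ hnm).symm
    rw [h1]
    have h2 := hRieszUpper (Finset.Ico n m) c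
    have h3 : ∑ k ∈ Finset.Ico n m, ‖c k‖ ^ 2 ≤ T - ∑ k ∈ Finset.range N, ‖c k‖ ^ 2 := by
      have hdisj : Disjoint (Finset.range N) (Finset.Ico n m) := by
        apply Finset.disjoint_left.mpr
        intro a ha hb
        rw [Finset.mem_range] at ha
        rw [Finset.mem_Ico] at hb
        omega
      have h4 : ∑ k ∈ Finset.range N ∪ Finset.Ico n m, ‖c k‖ ^ 2 ≤ T :=
        Summable.sum_le_tsum _ (fun i _ => sq_nonneg _) hA
      rw [Finset.sum_union hdisj] at h4
      linarith
    calc ‖∑ k ∈ Finset.Ico n m, c k • φ k‖ ^ 2 ≤ MR * ∑ k ∈ Finset.Ico n m, ‖c k‖ ^ 2 := h2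
      _ ≤ MR * (T - ∑ k ∈ Finset.range N, ‖c k‖ ^ 2) :=
          mul_le_mul_of_nonneg_left h3 (hmR.trans_le hmRMR).le
  have hMR0 : (0:ℝ) < MR := hmR.trans_le hmRMR
  -- Cauchy sequence
  have hTnn : ∀ N, 0 ≤ T - ∑ k ∈ Finset.range N, ‖c k‖ ^ 2 := by
    intro N
    have := Summable.sum_le_tsum (Finset.range N) (fun i _ => sq_nonneg (‖c i‖)) hA
    linarith
  have hcauchy : CauchySeq P := by
    apply cauchySeq_of_le_tendsto_0
      (fun N => Real.sqrt (MR * (T - ∑ k ∈ Finset.range N, ‖c k‖ ^ 2)))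
    · intro n m N hNn hNm
      have key : ∀ a b, N ≤ a → a ≤ b → dist (P a) (P b) ≤
          Real.sqrt (MR * (T - ∑ k ∈ Finset.range N, ‖c k‖ ^ 2)) := by
        intro a b hNa hab
        rw [dist_eq_norm, norm_sub_rev]
        exact Real.le_sqrt_of_sq_le (htail N a b hNa hab)
      rcases le_total n m with h | h
      · exact key n m hNn h
      · rw [dist_comm]; exact key m n hNm h
    · have h1 : Filter.Tendsto (fun N => ∑ k ∈ Finset.range N, ‖c k‖ ^ 2)
          Filter.atTop (nhds T) := hA.hasSum.tendsto_sum_nat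
      have h2 : Filter.Tendsto (fun N => MR * (T - ∑ k ∈ Finset.range N, ‖c k‖ ^ 2))
          Filter.atTop (nhds (MR * (T - T))) :=
        ((tendsto_const_nhds.sub h1).const_mul MR)
      have h3 := (Real.continuous_sqrt.tendsto (MR * (T - T))).comp h2
      simpa [Function.comp_def] using h3
  obtain ⟨g, hg⟩ := cauchySeq_tendsto_of_complete hcauchy
  refine ⟨g, hg, ?_⟩
  -- norm bound
  have hPN : ∀ N, ‖P N‖ ≤ Real.sqrt (MR * B) := by
    intro N
    apply Real.le_sqrt_of_sq_le
    calc ‖P N‖ ^ 2 ≤ MR * ∑ n ∈ Finset.range N, ‖c n‖ ^ 2 :=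
          hRieszUpper (Finset.range N) c
      _ ≤ MR * B := mul_le_mul_of_nonneg_left (hsumb N) hMR0.le
  have hgn : ‖g‖ ≤ Real.sqrt (MR * B) :=
    le_of_tendsto hg.norm (Filter.Eventually.of_forall hPN)
  apply hgn.trans
  have hB : MR * B = (MR / mR) * (S / κ0) ^ 2 := by
    rw [hBdef]
    ring
  rw [hB, Real.sqrt_mul (div_nonneg hMR0.le hmR.le),
    Real.sqrt_sq (by positivity : (0:ℝ) ≤ S / κ0)]
  apply le_of_eq
  ring
end
end

section
/- Let H be a complex Hilbert space, let (φ_n)_{n∈ℕ} be a sequence in H for which there are constants 0 < m_R ≤ M_R with m_R Σ|a_n|² ≤ ‖Σ a_n φ_n‖² ≤ M_R Σ|a_n|² for every finitely supported family (a_n) of complex numbers, and let (ψ_n)_{n∈ℕ} be a sequence in H such that every x ∈ H has the norm-convergent expansion x = Σ_{n∈ℕ} ⟨x, ψ_n⟩ φ_n. Let ζ > 0 and let (λ_n)_{n∈ℕ} be complex numbers with Re λ_n < 0 and |λ_n| ≤ ζ · |Re λ_n| for all n. Let m be a positive integer, let B : ℂ^m → H be a bounded linear map, let t ≥ 0 and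 let d : [0,t] → ℂ^m be continuous. Define α_n := λ_n · ∫₀ᵗ e^{λ_n (t−τ)} ⟨B d(τ), ψ_n⟩ dτ. Then (α_n)_{n∈ℕ} is square-summable, the series Σ_{n∈ℕ} α_n φ_n converges in H, and ‖ Σ_{n∈ℕ} α_n φ_n ‖ ≤ ζ · √( m · (M_R/m_R) · Σ_{k=1}^m ‖B e_k‖² ) · sup_{τ∈[0,t]} ‖d(τ)‖, where e_1, …, e_m is the standard basis of ℂ^m and ℂ^m carries the Euclidean norm. -/
noncomputable section

local notation "⟪" x ", " y "⟫" => @inner ℂ _ _ x y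

lemma exp_int_le {r t : ℝ} (hr : r < 0) (ht : 0 ≤ t) :
    ∫ τ in (0:ℝ)..t, Real.exp (r * (t - τ)) ≤ (-r)⁻¹ := by
  have h1 : (∫ τ in (0:ℝ)..t, Real.exp (r * (t - τ))) = ∫ s in (0:ℝ)..t, Real.exp (r * s) := by
    have := intervalIntegral.integral_comp_sub_left (fun s => Real.exp (r * s)) t
      (a := 0) (b := t)
    simpa using this
  have h2 : (∫ s in (0:ℝ)..t, Real.exp (r * s)) = r⁻¹ * (Real.exp (r * t) - 1) := by
    have := intervalIntegral.integral_comp_mul_left (fun x => Real.exp x) (c := r) (ne_of_lt hr)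
      (a := 0) (b := t)
    simp only [mul_zero, integral_exp, Real.exp_zero, smul_eq_mul] at this
    rw [this]
  rw [h1, h2]
  have hexp : 0 < Real.exp (r * t) := Real.exp_pos _
  have hexp1 : Real.exp (r * t) ≤ 1 := Real.exp_le_one_iff.mpr (by nlinarith)
  have hrinv : (0:ℝ) < -r := by linarith
  rw [show r⁻¹ * (Real.exp (r*t) - 1) = (1 - Real.exp (r*t)) * (-r)⁻¹ by
    rw [inv_neg]; ring]
  calc (1 - Real.exp (r*t)) * (-r)⁻¹ ≤ 1 * (-r)⁻¹ := by
        apply mul_le_mul_of_nonneg_right (by linarith) (by positivity)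
    _ = (-r)⁻¹ := one_mul _

lemma inner_rep {H : Type*} [NormedAddCommGroup H] [InnerProductSpace ℂ H]
    {m : ℕ} (B : EuclideanSpace ℂ (Fin m) →L[ℂ] H) (p : H)
    (w : EuclideanSpace ℂ (Fin m))
    (hw : ∀ k, w k = (starRingEnd ℂ) ⟪p, B (EuclideanSpace.single k 1)⟫)
    (y : EuclideanSpace ℂ (Fin m)) :
    ⟪p, B y⟫ = ⟪w, y⟫ := by
  conv_lhs => rw [← (EuclideanSpace.basisFun (Fin m) ℂ).sum_repr y]
  rw [map_sum, inner_sum, PiLp.inner_apply]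
  simp only [EuclideanSpace.basisFun_repr, EuclideanSpace.basisFun_apply, map_smul,
    inner_smul_right, hw, RCLike.inner_apply, RingHom.coe_coe, starRingEnd_self_apply]

/-- Estimate on the boundary-disturbance term `α(t)` of the spectral decomposition. -/
theorem statement_7 {H : Type*} [NormedAddCommGroup H] [InnerProductSpace ℂ H] [CompleteSpace H]
    (φ ψ : ℕ → H) (mR MR : ℝ) (hmR : 0 < mR) (hmRMR : mR ≤ MR)
    (hRieszLower : ∀ (s : Finset ℕ) (a : ℕ → ℂ),
      mR * ∑ n ∈ s, ‖a n‖ ^ 2 ≤ ‖∑ n ∈ s, a n • φ n‖ ^ 2)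
    (hRieszUpper : ∀ (s : Finset ℕ) (a : ℕ → ℂ),
      ‖∑ n ∈ s, a n • φ n‖ ^ 2 ≤ MR * ∑ n ∈ s, ‖a n‖ ^ 2)
    (hexpansion : ∀ x : H,
      Filter.Tendsto (fun N => ∑ n ∈ Finset.range N, ⟪ψ n, x⟫ • φ n) Filter.atTop (nhds x))
    (ζ : ℝ) (hζ : 0 < ζ) (lam : ℕ → ℂ)
    (hlamre : ∀ n, (lam n).re < 0)
    (hlamabs : ∀ n, ‖lam n‖ ≤ ζ * |(lam n).re|)
    {m : ℕ} (hm : 0 < m) (B : EuclideanSpace ℂ (Fin m) →L[ℂ] H)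
    (t : ℝ) (ht : 0 ≤ t)
    (d : ℝ → EuclideanSpace ℂ (Fin m)) (hd : ContinuousOn d (Set.Icc 0 t))
    (α : ℕ → ℂ)
    (hα : ∀ n, α n = lam n *
      ∫ τ in (0:ℝ)..t, Complex.exp (lam n * ((t:ℂ) - (τ:ℂ))) * ⟪ψ n, B (d τ)⟫) :
    (Summable fun n => ‖α n‖ ^ 2) ∧
    ∃ g : H, SeriesHasSum (fun n => α n • φ n) g ∧
      ‖g‖ ≤ ζ * Real.sqrt ((m : ℝ) * (MR / mR) *
              ∑ k : Fin m, ‖B (EuclideanSpace.single k 1)‖ ^ 2)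
          * sSup ((fun τ => ‖d τ‖) '' Set.Icc 0 t) := by
  classical
  have hMR0 : (0:ℝ) ≤ MR := le_trans (le_of_lt hmR) hmRMR
  have hbdd : BddAbove ((fun τ => ‖d τ‖) '' Set.Icc 0 t) :=
    (isCompact_Icc.image_of_continuousOn hd.norm).bddAbove
  set D := sSup ((fun τ => ‖d τ‖) '' Set.Icc 0 t) with hDdef
  have hDle : ∀ τ ∈ Set.Icc (0:ℝ) t, ‖d τ‖ ≤ D := fun τ hτ => le_csSup hbdd ⟨τ, hτ, rfl⟩
  have hD0 : 0 ≤ D := le_trans (norm_nonneg (d 0)) (hDle 0 ⟨le_rfl, ht⟩)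
  set w : ℕ → EuclideanSpace ℂ (Fin m) :=
    fun n => WithLp.toLp 2 (fun k => (starRingEnd ℂ) ⟪ψ n, B (EuclideanSpace.single k 1)⟫) with hwdef
  have hw : ∀ n k, w n k = (starRingEnd ℂ) ⟪ψ n, B (EuclideanSpace.single k 1)⟫ :=
    fun n k => rfl
  have hwnorm : ∀ n, ‖w n‖^2 = ∑ k, ‖⟪ψ n, B (EuclideanSpace.single k 1)⟫‖^2 := by
    intro n
    rw [EuclideanSpace.norm_eq, Real.sq_sqrt (by positivity)]
    exact Finset.sum_congr rfl fun k _ => by rw [hw, RCLike.norm_conj]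
  have hinner : ∀ n (y : EuclideanSpace ℂ (Fin m)), ‖⟪ψ n, B y⟫‖ ≤ ‖w n‖ * ‖y‖ := by
    intro n y
    rw [inner_rep B (ψ n) (w n) (hw n) y]
    exact norm_inner_le_norm _ _
  -- pointwise bound on `α n`
  have hαb : ∀ n, ‖α n‖ ≤ ζ * (‖w n‖ * D) := by
    intro n
    have hr : (lam n).re < 0 := hlamre n
    have hrpos : 0 < -(lam n).re := by linarith
    have hIb : ‖∫ τ in (0:ℝ)..t, Complex.exp (lam n * ((t:ℂ) - (τ:ℂ))) * ⟪ψ n, B (d τ)⟫‖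
        ≤ (‖w n‖ * D) * (-(lam n).re)⁻¹ := by
      have hptwise : ∀ τ ∈ Set.uIoc (0:ℝ) t,
          ‖Complex.exp (lam n * ((t:ℂ) - (τ:ℂ))) * ⟪ψ n, B (d τ)⟫‖
          ≤ (‖w n‖ * D) * Real.exp ((lam n).re * (t - τ)) := by
        intro τ hτ
        rw [Set.uIoc_of_le ht] at hτ
        have hτIcc : τ ∈ Set.Icc (0:ℝ) t := ⟨le_of_lt hτ.1, hτ.2⟩
        rw [norm_mul]
        have h1 : ‖Complex.exp (lam n * ((t:ℂ) - (τ:ℂ)))‖ = Real.exp ((lam n).re * (t - τ)) := by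
          rw [Complex.norm_exp]
          congr 1
          rw [show ((t:ℂ) - (τ:ℂ)) = ((t - τ : ℝ) : ℂ) by push_cast; ring]
          rw [mul_comm, Complex.re_ofReal_mul]
          ring
        have h2 : ‖⟪ψ n, B (d τ)⟫‖ ≤ ‖w n‖ * D :=
          le_trans (hinner n (d τ))
            (mul_le_mul_of_nonneg_left (hDle τ hτIcc) (norm_nonneg _))
        rw [h1]
        calc Real.exp ((lam n).re * (t-τ)) * ‖⟪ψ n, B (d τ)⟫‖
            ≤ Real.exp ((lam n).re * (t-τ)) * (‖w n‖ * D) :=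
              mul_le_mul_of_nonneg_left h2 (Real.exp_nonneg _)
          _ = (‖w n‖ * D) * Real.exp ((lam n).re * (t - τ)) := mul_comm _ _
      have hgint : IntervalIntegrable
          (fun τ => (‖w n‖ * D) * Real.exp ((lam n).re * (t - τ)))
          MeasureTheory.volume 0 t :=
        (Continuous.intervalIntegrable (by fun_prop) _ _)
      have hmain := intervalIntegral.norm_integral_le_of_norm_le
        (f := fun τ => Complex.exp (lam n * ((t:ℂ) - (τ:ℂ))) * ⟪ψ n, B (d τ)⟫)
        (μ := MeasureTheory.volume) (a := 0) (b := t) ht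
        (Filter.Eventually.of_forall fun τ hτ => hptwise τ (by rwa [Set.uIoc_of_le ht]))
        hgint
      refine le_trans hmain ?_
      rw [intervalIntegral.integral_const_mul]
      have h3 : |∫ τ in (0:ℝ)..t, Real.exp ((lam n).re * (t-τ))|
          = ∫ τ in (0:ℝ)..t, Real.exp ((lam n).re * (t-τ)) := by
        apply abs_of_nonneg
        apply intervalIntegral.integral_nonneg ht
        intro x _; positivity
      exact mul_le_mul_of_nonneg_left (exp_int_le hr ht) (by positivity)
    rw [hα n, norm_mul]
    have hlam1 : ‖lam n‖ * (-(lam n).re)⁻¹ ≤ ζ := by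
      have h4 : ‖lam n‖ ≤ ζ * (-(lam n).re) := by
        have := hlamabs n
        rwa [abs_of_neg hr] at this
      rw [← div_eq_mul_inv, div_le_iff₀ hrpos]
      linarith
    calc ‖lam n‖ * ‖∫ τ in (0:ℝ)..t, Complex.exp (lam n * ((t:ℂ) - (τ:ℂ))) * ⟪ψ n, B (d τ)⟫‖
        ≤ ‖lam n‖ * ((‖w n‖ * D) * (-(lam n).re)⁻¹) :=
          mul_le_mul_of_nonneg_left hIb (norm_nonneg _)
      _ = (‖lam n‖ * (-(lam n).re)⁻¹) * (‖w n‖ * D) := by ring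
      _ ≤ ζ * (‖w n‖ * D) := mul_le_mul_of_nonneg_right hlam1 (by positivity)
  -- coefficient square-summability
  have hcoef : ∀ y : H, (Summable fun n => ‖⟪ψ n, y⟫‖^2) ∧
      ∑' n, ‖⟪ψ n, y⟫‖^2 ≤ ‖y‖^2 / mR := by
    intro y
    have key : ∀ N, ∑ n ∈ Finset.range N, ‖⟪ψ n, y⟫‖^2 ≤ ‖y‖^2 / mR := by
      intro N
      have h1 : ∀ M, N ≤ M → mR * ∑ n ∈ Finset.range N, ‖⟪ψ n, y⟫‖^2
          ≤ ‖∑ n ∈ Finset.range M, ⟪ψ n, y⟫ • φ n‖^2 := by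
        intro M hNM
        refine le_trans ?_ (hRieszLower (Finset.range M) fun n => ⟪ψ n, y⟫)
        refine mul_le_mul_of_nonneg_left ?_ (le_of_lt hmR)
        exact Finset.sum_le_sum_of_subset_of_nonneg (Finset.range_subset_range.mpr hNM)
          (fun i _ _ => by positivity)
      have h2 : Filter.Tendsto (fun M => ‖∑ n ∈ Finset.range M, ⟪ψ n, y⟫ • φ n‖^2)
          Filter.atTop (nhds (‖y‖^2)) := (hexpansion y).norm.pow 2
      have h3 := ge_of_tendsto h2 (Filter.eventually_atTop.mpr ⟨N, h1⟩)
      rw [le_div_iff₀ hmR]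
      linarith
    exact ⟨summable_of_sum_range_le (fun n => by positivity) key,
      Real.tsum_le_of_sum_range_le (fun n => by positivity) key⟩
  set S := ∑ k : Fin m, ‖B (EuclideanSpace.single k 1)‖^2 with hSdef
  have hS0 : 0 ≤ S := Finset.sum_nonneg fun k _ => by positivity
  have hwsq : Summable (fun n => ‖w n‖^2) := by
    have h := funext hwnorm
    rw [h]
    exact summable_sum fun k _ => (hcoef (B (EuclideanSpace.single k 1))).1
  have hwsum : ∑' n, ‖w n‖^2 ≤ S / mR := by
    calc ∑' n, ‖w n‖^2
        = ∑' n, ∑ k : Fin m, ‖⟪ψ n, B (EuclideanSpace.single k 1)⟫‖^2 := tsum_congr hwnorm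
      _ = ∑ k : Fin m, ∑' n, ‖⟪ψ n, B (EuclideanSpace.single k 1)⟫‖^2 :=
          Summable.tsum_finsetSum fun k _ => (hcoef (B (EuclideanSpace.single k 1))).1
      _ ≤ ∑ k : Fin m, ‖B (EuclideanSpace.single k 1)‖^2 / mR :=
          Finset.sum_le_sum fun k _ => (hcoef (B (EuclideanSpace.single k 1))).2
      _ = S / mR := by rw [hSdef, Finset.sum_div]
  have hαsq : ∀ n, ‖α n‖^2 ≤ ζ^2 * D^2 * ‖w n‖^2 := by
    intro n
    calc ‖α n‖^2 ≤ (ζ * (‖w n‖ * D))^2 := pow_le_pow_left₀ (norm_nonneg (α n)) (hαb n) 2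
      _ = ζ^2 * D^2 * ‖w n‖^2 := by ring
  have hsummable : Summable fun n => ‖α n‖^2 :=
    Summable.of_nonneg_of_le (fun n => by positivity) hαsq (hwsq.mul_left _)
  refine ⟨hsummable, ?_⟩
  set T := ∑' n, ‖α n‖^2 with hTdef
  have hTle : T ≤ ζ^2 * D^2 * (S / mR) := by
    calc T ≤ ∑' n, ζ^2 * D^2 * ‖w n‖^2 := Summable.tsum_le_tsum hαsq hsummable (hwsq.mul_left _)
      _ = ζ^2 * D^2 * ∑' n, ‖w n‖^2 := tsum_mul_left
      _ ≤ ζ^2 * D^2 * (S/mR) := mul_le_mul_of_nonneg_left hwsum (by positivity)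
  set P : ℕ → ℝ := fun N => ∑ n ∈ Finset.range N, ‖α n‖^2 with hPdef
  have hPmono : Monotone P := fun p q hpq => Finset.sum_le_sum_of_subset_of_nonneg
    (Finset.range_subset_range.mpr hpq) (fun i _ _ => by positivity)
  have hPle : ∀ N, P N ≤ T := fun N =>
    Summable.sum_le_tsum (Finset.range N) (fun i _ => by positivity) hsummable
  have hPtend : Filter.Tendsto P Filter.atTop (nhds T) := hsummable.hasSum.tendsto_sum_nat
  set Ser : ℕ → H := fun N => ∑ n ∈ Finset.range N, α n • φ n with hSerdef
  have hdist : ∀ p q N, N ≤ p → N ≤ q →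
      dist (Ser p) (Ser q) ≤ Real.sqrt (MR * (T - P N)) := by
    have key : ∀ p q, p ≤ q → ∀ N, N ≤ p →
        dist (Ser p) (Ser q) ≤ Real.sqrt (MR * (T - P N)) := by
      intro p q hpq N hNp
      have hdiff : Ser q - Ser p = ∑ n ∈ Finset.Ico p q, α n • φ n :=
        (Finset.sum_Ico_eq_sub _ hpq).symm
      rw [dist_comm, dist_eq_norm, hdiff]
      have hsq : ‖∑ n ∈ Finset.Ico p q, α n • φ n‖^2 ≤ MR * (T - P N) := by
        refine le_trans (hRieszUpper (Finset.Ico p q) α) ?_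
        refine mul_le_mul_of_nonneg_left ?_ hMR0
        rw [Finset.sum_Ico_eq_sub _ hpq]
        have h10 := hPle q
        have h11 := hPmono hNp
        simp only [hPdef] at h10 h11 ⊢
        linarith
      calc ‖∑ n ∈ Finset.Ico p q, α n • φ n‖
          = Real.sqrt (‖∑ n ∈ Finset.Ico p q, α n • φ n‖^2) :=
            (Real.sqrt_sq (norm_nonneg _)).symm
        _ ≤ Real.sqrt (MR * (T - P N)) := Real.sqrt_le_sqrt hsq
    intro p q N hNp hNq
    rcases le_total p q with h | h
    · exact key p q h N hNp
    · rw [dist_comm]; exact key q p h N hNq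
  have hb0 : Filter.Tendsto (fun N => Real.sqrt (MR * (T - P N))) Filter.atTop (nhds 0) := by
    have h5 : Filter.Tendsto (fun N => MR * (T - P N)) Filter.atTop (nhds 0) := by
      have h6 := (hPtend.const_sub T).const_mul MR
      simpa using h6
    have h7 := (Real.continuous_sqrt.tendsto 0).comp h5
    simpa [Function.comp_def] using h7
  have hcauchy : CauchySeq Ser :=
    cauchySeq_of_le_tendsto_0 _ (fun p q N hp hq => hdist p q N hp hq) hb0
  obtain ⟨g, hg⟩ := cauchySeq_tendsto_of_complete hcauchy
  refine ⟨g, hg, ?_⟩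
  have hgn : ‖g‖^2 ≤ MR * T := by
    have h6 : Filter.Tendsto (fun N => ‖Ser N‖^2) Filter.atTop (nhds (‖g‖^2)) :=
      hg.norm.pow 2
    refine le_of_tendsto h6 (Filter.Eventually.of_forall fun N => ?_)
    exact le_trans (hRieszUpper (Finset.range N) α)
      (mul_le_mul_of_nonneg_left (hPle N) hMR0)
  have hm1 : (1:ℝ) ≤ m := by exact_mod_cast hm
  have hfin : MR * T ≤ ζ^2 * ((m:ℝ) * (MR/mR) * S) * D^2 := by
    have h7 : MR * T ≤ MR * (ζ^2 * D^2 * (S/mR)) := mul_le_mul_of_nonneg_left hTle hMR0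
    have h8 : MR * (ζ^2 * D^2 * (S/mR)) = ζ^2 * ((MR/mR) * S) * D^2 := by
      field_simp
    have hx : (MR/mR) * S ≤ (m:ℝ) * ((MR/mR) * S) :=
      le_mul_of_one_le_left (by positivity) hm1
    have h9 : ζ^2 * ((MR/mR) * S) * D^2 ≤ ζ^2 * ((m:ℝ) * ((MR/mR) * S)) * D^2 :=
      mul_le_mul_of_nonneg_right (mul_le_mul_of_nonneg_left hx (by positivity)) (by positivity)
    calc MR * T ≤ MR * (ζ^2 * D^2 * (S/mR)) := h7
      _ = ζ^2 * ((MR/mR) * S) * D^2 := h8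
      _ ≤ ζ^2 * ((m:ℝ) * ((MR/mR) * S)) * D^2 := h9
      _ = ζ^2 * ((m:ℝ) * (MR/mR) * S) * D^2 := by ring
  calc ‖g‖ = Real.sqrt (‖g‖^2) := (Real.sqrt_sq (norm_nonneg _)).symm
    _ ≤ Real.sqrt (ζ^2 * ((m:ℝ) * (MR/mR) * S) * D^2) :=
        Real.sqrt_le_sqrt (le_trans hgn hfin)
    _ = ζ * Real.sqrt ((m:ℝ) * (MR/mR) * S) * D := by
        rw [Real.sqrt_mul (by positivity), Real.sqrt_mul (by positivity),
          Real.sqrt_sq (le_of_lt hζ), Real.sqrt_sq hD0]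
end
end

section
/- Suppose 𝒜₀ is injective and S is a strongly continuous semigroup on H generated by 𝒜₀. Then for every X₀ ∈ H and all continuous d : [0,∞) → ℂ^m, U : [0,∞) → H, there is at most one weak solution associated with (X₀, d, U): any two weak solutions associated with (X₀, d, U) are equal. -/
noncomputable section

local notation "⟪" x ", " y "⟫" => @inner ℂ _ _ x y

/-- `X` is a weak solution of the boundary control system, associated with `(X0, d, U)`:
for every `T > 0` and every test function `z` over `[0, T]` (continuously differentiable,
valued in the domain `domAstar` of the adjoint `Astar` of the disturbance-free operator,
with `Astar ∘ z` continuous and `z T = 0`) the variational identity holds. -/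
def IsWeakSolution {H : Type*} [NormedAddCommGroup H] [InnerProductSpace ℂ H] {m : ℕ}
    (A : H → H) (domAstar : Set H) (Astar : H → H)
    (B : EuclideanSpace ℂ (Fin m) →L[ℂ] H)
    (X0 : H) (d : ℝ → EuclideanSpace ℂ (Fin m)) (U : ℝ → H) (X : ℝ → H) : Prop :=
  ContinuousOn X (Set.Ici 0) ∧
  ∀ T > (0:ℝ), ∀ z z' : ℝ → H,
    (∀ t ∈ Set.Icc (0:ℝ) T, z t ∈ domAstar) →
    (∀ t ∈ Set.Icc (0:ℝ) T, HasDerivWithinAt z (z' t) (Set.Icc 0 T) t) →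
    ContinuousOn z' (Set.Icc 0 T) →
    ContinuousOn (fun t => Astar (z t)) (Set.Icc 0 T) →
    z T = 0 →
    (∫ t in (0:ℝ)..T, ⟪Astar (z t) + z' t, X t⟫) =
      -⟪z 0, X0⟫ + (∫ t in (0:ℝ)..T, ⟪Astar (z t), B (d t)⟫)
        - (∫ t in (0:ℝ)..T, ⟪z t, A (B (d t))⟫)
        - ∫ t in (0:ℝ)..T, ⟪z t, U t⟫

/-- `S` is a strongly continuous semigroup on `H` whose generator is the restriction of `A`
to `domA0`. -/
def IsC0SemigroupGeneratedBy {H : Type*} [NormedAddCommGroup H] [NormedSpace ℂ H]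
    (S : ℝ → H →L[ℂ] H) (domA0 : Set H) (A : H → H) : Prop :=
  S 0 = ContinuousLinearMap.id ℂ H ∧
  (∀ t ∈ Set.Ici (0:ℝ), ∀ s ∈ Set.Ici (0:ℝ), S (t + s) = (S t).comp (S s)) ∧
  (∀ x : H, ContinuousOn (fun t => S t x) (Set.Ici 0)) ∧
  (∀ x : H, x ∈ domA0 ↔ ∃ y : H,
      Filter.Tendsto (fun h : ℝ => h⁻¹ • (S h x - x)) (nhdsWithin 0 (Set.Ioi 0)) (nhds y)) ∧
  ∀ x ∈ domA0, Filter.Tendsto (fun h : ℝ => h⁻¹ • (S h x - x)) (nhdsWithin 0 (Set.Ioi 0)) (nhds (A x))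

open Filter MeasureTheory Set Topology

section Helpers

variable {E : Type*} [NormedAddCommGroup E] [NormedSpace ℝ E]

lemma aux_tendsto_slope_shift {g : ℝ → E} {r : ℝ} {L : E} :
    Tendsto (fun e : ℝ => e⁻¹ • (g (r + e) - g r)) (nhdsWithin 0 (Set.Ioi 0)) (nhds L) ↔
      Tendsto (fun y : ℝ => (y - r)⁻¹ • (g y - g r)) (nhdsWithin r (Set.Ioi r)) (nhds L) := by
  have key : Tendsto (fun y : ℝ => y - r) (nhdsWithin r (Set.Ioi r)) (nhdsWithin 0 (Set.Ioi 0)) := by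
    apply tendsto_nhdsWithin_of_tendsto_nhds_of_eventually_within
    · have h1 : Tendsto (fun y : ℝ => y - r) (nhds r) (nhds (r - r)) :=
        (continuous_id.sub continuous_const).tendsto r
      rw [sub_self] at h1
      exact h1.mono_left nhdsWithin_le_nhds
    · filter_upwards [self_mem_nhdsWithin] with y hy
      simpa [sub_pos] using hy
  have key2 : Tendsto (fun e : ℝ => r + e) (nhdsWithin 0 (Set.Ioi 0)) (nhdsWithin r (Set.Ioi r)) := by
    apply tendsto_nhdsWithin_of_tendsto_nhds_of_eventually_within
    · have h1 : Tendsto (fun e : ℝ => r + e) (nhds 0) (nhds (r + 0)) :=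
        (continuous_const.add continuous_id).tendsto 0
      rw [add_zero] at h1
      exact h1.mono_left nhdsWithin_le_nhds
    · filter_upwards [self_mem_nhdsWithin] with e he
      simpa using he
  constructor
  · intro h
    have := h.comp key
    refine this.congr fun y => ?_
    simp only [Function.comp]
    rw [add_sub_cancel]
  · intro h
    have := h.comp key2
    refine this.congr fun e => ?_
    simp only [Function.comp]
    rw [add_sub_cancel_left]

lemma aux_hasDerivWithinAt_right {g : ℝ → E} {r : ℝ} {L : E}
    (h : Tendsto (fun e : ℝ => e⁻¹ • (g (r + e) - g r)) (nhdsWithin 0 (Set.Ioi 0)) (nhds L)) :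
    HasDerivWithinAt g L (Set.Ici r) r := by
  have h2 := aux_tendsto_slope_shift.mp h
  rw [hasDerivWithinAt_iff_tendsto_slope, Set.Ici_sdiff_left]
  refine h2.congr fun y => ?_
  simp [slope_def_module]

lemma aux_slope_right_of_hasDerivAt {g : ℝ → E} {r : ℝ} {L : E} (h : HasDerivAt g L r) :
    Tendsto (fun e : ℝ => e⁻¹ • (g (r + e) - g r)) (nhdsWithin 0 (Set.Ioi 0)) (nhds L) := by
  apply aux_tendsto_slope_shift.mpr
  have h2 := (h.hasDerivWithinAt (s := Set.Ioi r))
  rw [hasDerivWithinAt_iff_tendsto_slope' (by simp)] at h2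
  refine h2.congr fun y => ?_
  simp [slope_def_module]

lemma aux_avg_tendsto [CompleteSpace E] {f : ℝ → E} (hf : Continuous f) :
    Tendsto (fun h : ℝ => h⁻¹ • ∫ t in (0:ℝ)..h, f t) (nhdsWithin 0 (Set.Ioi 0)) (nhds (f 0)) := by
  have h0 : HasDerivAt (fun u => ∫ t in (0:ℝ)..u, f t) (f 0) 0 :=
    intervalIntegral.integral_hasDerivAt_right (hf.intervalIntegrable _ _)
      (hf.stronglyMeasurableAtFilter _ _) hf.continuousAt
  have := aux_slope_right_of_hasDerivAt h0
  simpa using this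

end Helpers

section InnerHelpers

variable {H : Type*} [NormedAddCommGroup H] [InnerProductSpace ℂ H] [CompleteSpace H]

lemma aux_dense_eq_zero {s : Set H} (hd : Dense s) {v : H} (h : ∀ x ∈ s, ⟪v, x⟫ = 0) : v = 0 := by
  have h2 : (fun x : H => ⟪v, x⟫) = fun _ => (0 : ℂ) :=
    Continuous.ext_on hd (continuous_const.inner continuous_id) continuous_const
      (fun x hx => h x hx)
  have h3 : ⟪v, v⟫ = 0 := congrFun h2 v
  simpa [inner_self_eq_zero] using h3

lemma aux_inner_intervalIntegral {f : ℝ → H} {a b : ℝ} (hf : Continuous f) (c : H) :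
    ⟪c, ∫ t in a..b, f t⟫ = ∫ t in a..b, ⟪c, f t⟫ := by
  simp only [intervalIntegral]
  rw [inner_sub_right, integral_inner (hf.integrableOn_Ioc), integral_inner (hf.integrableOn_Ioc)]

end InnerHelpers
section Semigroup

variable {H : Type*} [NormedAddCommGroup H] [InnerProductSpace ℂ H] [CompleteSpace H]
variable {S : ℝ → H →L[ℂ] H} {D0 : Set H} {A : H → H}

lemma aux_bound (hS : IsC0SemigroupGeneratedBy S D0 A) (T : ℝ) :
    ∃ M : ℝ, 0 ≤ M ∧ ∀ t ∈ Set.Icc (0:ℝ) T, ‖S t‖ ≤ M := by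
  have h : ∀ x : H, ∃ C, ∀ i : Set.Icc (0:ℝ) T, ‖S i x‖ ≤ C := by
    intro x
    obtain ⟨C, hC⟩ := (isCompact_Icc (a := (0:ℝ)) (b := T)).exists_bound_of_continuousOn
      ((hS.2.2.1 x).mono (fun t ht => ht.1))
    exact ⟨C, fun i => hC i i.2⟩
  obtain ⟨C', hC'⟩ := banach_steinhaus (g := fun i : Set.Icc (0:ℝ) T => S i) h
  refine ⟨max C' 0, le_max_right _ _, fun t ht => ?_⟩
  exact le_trans (hC' ⟨t, ht⟩) (le_max_left _ _)

lemma aux_orbit_mem (hS : IsC0SemigroupGeneratedBy S D0 A) {x : H} (hx : x ∈ D0) {t : ℝ}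
    (ht : 0 ≤ t) : S t x ∈ D0 ∧ A (S t x) = S t (A x) := by
  have hlim : Filter.Tendsto (fun e : ℝ => e⁻¹ • (S e (S t x) - S t x))
      (nhdsWithin 0 (Set.Ioi 0)) (nhds (S t (A x))) := by
    have h1 : Filter.Tendsto (fun e : ℝ => S t (e⁻¹ • (S e x - x)))
        (nhdsWithin 0 (Set.Ioi 0)) (nhds (S t (A x))) :=
      ((S t).continuous.tendsto _).comp (hS.2.2.2.2 x hx)
    refine h1.congr' ?_
    filter_upwards [self_mem_nhdsWithin] with e he
    have h2 : S (e + t) = (S e).comp (S t) := hS.2.1 e (Set.mem_Ici.mpr (le_of_lt he)) t ht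
    have h3 : S (t + e) = (S t).comp (S e) := hS.2.1 t ht e (Set.mem_Ici.mpr (le_of_lt he))
    have hcomm : S e (S t x) = S t (S e x) := by
      have : (S e).comp (S t) = (S t).comp (S e) := by rw [← h2, add_comm e t, h3]
      calc S e (S t x) = ((S e).comp (S t)) x := rfl
        _ = ((S t).comp (S e)) x := by rw [this]
        _ = S t (S e x) := rfl
    rw [(S t).map_smul_of_tower, map_sub, hcomm]
  have hmem : S t x ∈ D0 := (hS.2.2.2.1 _).mpr ⟨_, hlim⟩
  exact ⟨hmem, tendsto_nhds_unique (hS.2.2.2.2 _ hmem) hlim⟩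

lemma aux_orbit_cont (hS : IsC0SemigroupGeneratedBy S D0 A) (x : H) :
    Continuous fun t : ℝ => S (max t 0) x :=
  (hS.2.2.1 x).comp_continuous (continuous_id.max continuous_const)
    (fun t => Set.mem_Ici.mpr (le_max_right _ _))

lemma aux_orbit_deriv_right (hS : IsC0SemigroupGeneratedBy S D0 A) {x : H} (hx : x ∈ D0)
    {r : ℝ} (hr : 0 ≤ r) :
    HasDerivWithinAt (fun t : ℝ => S (max t 0) x) (S r (A x)) (Set.Ici r) r := by
  apply aux_hasDerivWithinAt_right
  have h1 : Filter.Tendsto (fun e : ℝ => S r (e⁻¹ • (S e x - x)))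
      (nhdsWithin 0 (Set.Ioi 0)) (nhds (S r (A x))) :=
    ((S r).continuous.tendsto _).comp (hS.2.2.2.2 x hx)
  refine h1.congr' ?_
  filter_upwards [self_mem_nhdsWithin] with e he
  have h2 : S (r + e) = (S r).comp (S e) := hS.2.1 r hr e (Set.mem_Ici.mpr (le_of_lt he))
  have hm1 : max (r + e) 0 = r + e := max_eq_left (add_nonneg hr (Set.mem_Ioi.mp he).le)
  have hm2 : max r 0 = r := max_eq_left hr
  rw [(S r).map_smul_of_tower, map_sub, hm1, hm2, h2]
  rfl

lemma aux_orbit_integral (hS : IsC0SemigroupGeneratedBy S D0 A) {x : H} (hx : x ∈ D0) {t : ℝ}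
    (ht : 0 ≤ t) : S t x - x = ∫ r in (0:ℝ)..t, S (max r 0) (A x) := by
  have hcont := aux_orbit_cont hS (A x)
  have hF : ∀ u : ℝ, HasDerivAt (fun v => ∫ r in (0:ℝ)..v, S (max r 0) (A x)) (S (max u 0) (A x)) u :=
    fun u => intervalIntegral.integral_hasDerivAt_right (hcont.intervalIntegrable _ _)
      (hcont.stronglyMeasurableAtFilter _ _) hcont.continuousAt
  have key := eq_of_has_deriv_right_eq (a := 0) (b := t)
    (f' := fun u => S (max u 0) (A x))
    (f := fun u => S (max u 0) x)
    (g := fun u => x + ∫ r in (0:ℝ)..u, S (max r 0) (A x))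
    (fun u hu => by
      have h5 : max u 0 = u := max_eq_left hu.1
      simpa [h5] using aux_orbit_deriv_right hS hx hu.1)
    (fun u hu => ((hF u).const_add x).hasDerivWithinAt)
    ((aux_orbit_cont hS x).continuousOn)
    ((continuous_const.add (continuous_iff_continuousAt.mpr fun u => (hF u).continuousAt)).continuousOn)
    (by simp [hS.1])
  have h4 := key t ⟨ht, le_rfl⟩
  simp only [max_eq_left ht] at h4
  rw [h4]
  abel

lemma aux_graph_limit (hS : IsC0SemigroupGeneratedBy S D0 A) {v w : H} (x : ℕ → H)
    (hxD : ∀ n, x n ∈ D0) (hxv : Filter.Tendsto x Filter.atTop (nhds v))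
    (hxw : Filter.Tendsto (fun n => A (x n)) Filter.atTop (nhds w)) :
    v ∈ D0 ∧ A v = w := by
  have key : ∀ t : ℝ, 0 ≤ t → S t v - v = ∫ r in (0:ℝ)..t, S (max r 0) w := by
    intro t ht
    obtain ⟨M, hM0, hM⟩ := aux_bound hS t
    have h1 : Filter.Tendsto (fun n => S t (x n) - x n) Filter.atTop (nhds (S t v - v)) :=
      (((S t).continuous.tendsto _).comp hxv).sub hxv
    have h2 : Filter.Tendsto (fun n => ∫ r in (0:ℝ)..t, S (max r 0) (A (x n))) Filter.atTop
        (nhds (∫ r in (0:ℝ)..t, S (max r 0) w)) := by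
      rw [tendsto_iff_norm_sub_tendsto_zero]
      have hbound : ∀ n, ‖(∫ r in (0:ℝ)..t, S (max r 0) (A (x n))) -
          ∫ r in (0:ℝ)..t, S (max r 0) w‖ ≤ M * ‖A (x n) - w‖ * |t - 0| := by
        intro n
        have hi1 := (aux_orbit_cont hS (A (x n))).intervalIntegrable (μ := MeasureTheory.volume) 0 t
        have hi2 := (aux_orbit_cont hS w).intervalIntegrable (μ := MeasureTheory.volume) 0 t
        rw [← intervalIntegral.integral_sub hi1 hi2]
        apply intervalIntegral.norm_integral_le_of_norm_le_const
        intro r hr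
        rw [Set.uIoc_of_le ht] at hr
        have hrr : max r 0 ∈ Set.Icc (0:ℝ) t := ⟨le_max_right _ _, by
          rw [max_eq_left hr.1.le]; exact hr.2⟩
        calc ‖S (max r 0) (A (x n)) - S (max r 0) w‖ = ‖S (max r 0) (A (x n) - w)‖ := by
              rw [map_sub]
          _ ≤ ‖S (max r 0)‖ * ‖A (x n) - w‖ := (S (max r 0)).le_opNorm _
          _ ≤ M * ‖A (x n) - w‖ := by
              apply mul_le_mul_of_nonneg_right (hM _ hrr) (norm_nonneg _)
      have hz : Filter.Tendsto (fun n => M * ‖A (x n) - w‖ * |t - 0|) Filter.atTop (nhds 0) := by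
        have := (tendsto_iff_norm_sub_tendsto_zero.mp hxw)
        have h3 : Filter.Tendsto (fun n => M * ‖A (x n) - w‖ * |t - 0|) Filter.atTop
            (nhds (M * 0 * |t - 0|)) := (this.const_mul M).mul_const _
        simpa using h3
      exact squeeze_zero (fun n => norm_nonneg _) hbound hz
    have h3 : ∀ n, S t (x n) - x n = ∫ r in (0:ℝ)..t, S (max r 0) (A (x n)) :=
      fun n => aux_orbit_integral hS (hxD n) ht
    exact tendsto_nhds_unique (h1.congr (fun n => h3 n)) h2
  have havg : Filter.Tendsto (fun h : ℝ => h⁻¹ • (S h v - v)) (nhdsWithin 0 (Set.Ioi 0)) (nhds w) := by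
    have h2 := aux_avg_tendsto (aux_orbit_cont hS w)
    have h0 : S (max (0:ℝ) 0) w = w := by rw [max_self, hS.1]; rfl
    rw [h0] at h2
    refine h2.congr' ?_
    filter_upwards [self_mem_nhdsWithin] with e he
    rw [key e he.le]
  have hmem : v ∈ D0 := (hS.2.2.2.1 v).mpr ⟨w, havg⟩
  exact ⟨hmem, tendsto_nhds_unique (hS.2.2.2.2 v hmem) havg⟩

end Semigroup
section Graph

variable {H : Type*} [NormedAddCommGroup H] [InnerProductSpace ℂ H] [CompleteSpace H]

set_option synthInstance.maxHeartbeats 1000000 in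
lemma aux_weak_graph {D0 : Set H} {A : H → H} {domAstar : Set H} {Astar : H → H}
    (hdense : Dense D0)
    (hG0 : (0:H) ∈ D0 ∧ A 0 = 0)
    (hGsub : ∀ (a : ℂ) (x y : H), x ∈ D0 → y ∈ D0 →
      (a • x + y ∈ D0 ∧ A (a • x + y) = a • A x + A y))
    (hadj : ∀ z ∈ domAstar, ∀ x ∈ D0, ⟪Astar z, x⟫ = ⟪z, A x⟫)
    (hadjdom : ∀ z : H, (∃ w : H, ∀ x ∈ D0, ⟪w, x⟫ = ⟪z, A x⟫) → z ∈ domAstar)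
    (hclosed : ∀ (x : ℕ → H) (v w : H), (∀ n, x n ∈ D0) →
      Filter.Tendsto x Filter.atTop (nhds v) →
      Filter.Tendsto (fun n => A (x n)) Filter.atTop (nhds w) → v ∈ D0 ∧ A v = w)
    {v w : H} (hvw : ∀ φ ∈ domAstar, ⟪Astar φ, v⟫ = ⟪φ, w⟫) :
    v ∈ D0 ∧ A v = w := by
  classical
  let G : Submodule ℂ (WithLp 2 (H × H)) :=
    { carrier := {p : WithLp 2 (H × H) | p.fst ∈ D0 ∧ A p.fst = p.snd}
      add_mem' := by
        rintro p q ⟨hp1, hp2⟩ ⟨hq1, hq2⟩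
        have h := hGsub 1 p.fst q.fst hp1 hq1
        simp only [one_smul] at h
        refine ⟨?_, ?_⟩
        · rw [WithLp.add_fst]; exact h.1
        · rw [WithLp.add_fst, WithLp.add_snd, h.2, hp2, hq2]
      zero_mem' := by
        refine ⟨?_, ?_⟩
        · rw [WithLp.zero_fst]; exact hG0.1
        · rw [WithLp.zero_fst, WithLp.zero_snd]; exact hG0.2
      smul_mem' := by
        rintro c p ⟨hp1, hp2⟩
        have h := hGsub c p.fst 0 hp1 hG0.1
        rw [add_zero] at h
        refine ⟨?_, ?_⟩
        · rw [WithLp.smul_fst]; exact h.1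
        · rw [WithLp.smul_fst, WithLp.smul_snd, h.2, hG0.2, add_zero, hp2] }
  have hGclosed : IsClosed (G : Set (WithLp 2 (H × H))) := by
    apply IsSeqClosed.isClosed
    intro pn p hpn hlim
    have e := (WithLp.prodContinuousLinearEquiv 2 ℂ H H)
    have h1 : Filter.Tendsto (fun n => (pn n).fst) Filter.atTop (nhds p.fst) := by
      have h := ((continuous_fst.comp
        (WithLp.prodContinuousLinearEquiv 2 ℂ H H).continuous).tendsto p).comp hlim
      exact h
    have h2 : Filter.Tendsto (fun n => (pn n).snd) Filter.atTop (nhds p.snd) := by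
      have h := ((continuous_snd.comp
        (WithLp.prodContinuousLinearEquiv 2 ℂ H H).continuous).tendsto p).comp hlim
      exact h
    have h3 : Filter.Tendsto (fun n => A ((pn n).fst)) Filter.atTop (nhds p.snd) :=
      h2.congr fun n => ((hpn n).2).symm
    exact hclosed (fun n => (pn n).fst) p.fst p.snd (fun n => (hpn n).1) h1 h3
  haveI : CompleteSpace G := hGclosed.completeSpace_coe
  set P : WithLp 2 (H × H) := (WithLp.equiv 2 (H × H)).symm (v, w) with hPdef
  have hPf : P.fst = v := rfl
  have hPs : P.snd = w := rfl
  have hP : P ∈ Gᗮᗮ := by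
    rw [Submodule.mem_orthogonal]
    intro q hq
    rw [Submodule.mem_orthogonal] at hq
    have hkey : ∀ x ∈ D0, ⟪x, q.fst⟫ + ⟪A x, q.snd⟫ = 0 := by
      intro x hx
      have hmem : (WithLp.equiv 2 (H × H)).symm (x, A x) ∈ G := by
        constructor
        · rw [WithLp.equiv_symm_apply, WithLp.toLp_fst]; exact hx
        · rw [WithLp.equiv_symm_apply, WithLp.toLp_fst, WithLp.toLp_snd]
      have h := hq _ hmem
      rw [WithLp.prod_inner_apply, WithLp.equiv_symm_apply] at h
      exact h
    have hkey2 : ∀ x ∈ D0, ⟪q.fst, x⟫ + ⟪q.snd, A x⟫ = 0 := by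
      intro x hx
      have h := congrArg (starRingEnd ℂ) (hkey x hx)
      simpa [inner_conj_symm] using h
    have hq2 : q.snd ∈ domAstar := by
      apply hadjdom
      refine ⟨-q.fst, fun x hx => ?_⟩
      rw [inner_neg_left]
      linear_combination -hkey2 x hx
    have hAstarq : Astar q.snd = -q.fst := by
      have hz : Astar q.snd + q.fst = 0 := by
        apply aux_dense_eq_zero hdense
        intro x hx
        rw [inner_add_left, hadj q.snd hq2 x hx]
        linear_combination hkey2 x hx
      exact eq_neg_of_add_eq_zero_left hz
    rw [WithLp.prod_inner_apply]
    simp only [WithLp.ofLp_fst, WithLp.ofLp_snd]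
    rw [hPf, hPs, ← hvw q.snd hq2, hAstarq, inner_neg_left]
    ring
  rw [Submodule.orthogonal_orthogonal] at hP
  exact ⟨by rw [← hPf]; exact hP.1, by rw [← hPf, ← hPs]; exact hP.2⟩

end Graph
section ScalarODE

open intervalIntegral in
lemma aux_weak_ode_scalar {ff gg : ℝ → ℂ} (hffc : Continuous ff) (hggc : Continuous gg)
    {T : ℝ} (hT0 : 0 < T)
    (hint : ∀ GG kk : ℝ → ℂ, (∀ u : ℝ, HasDerivAt GG (-(kk u)) u) → Continuous kk → GG T = 0 →
      (∫ t in (0:ℝ)..T, ((starRingEnd ℂ) (GG t) * gg t - (starRingEnd ℂ) (kk t) * ff t)) = 0)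
    {s : ℝ} (hs0 : 0 ≤ s) (hsT : s < T) :
    ff s = ∫ t in (0:ℝ)..s, gg t := by
  set FF : ℝ → ℂ := fun u => ∫ t in (0:ℝ)..u, gg t with hFFdef
  have hFFd : ∀ u : ℝ, HasDerivAt FF (gg u) u := fun u =>
    integral_hasDerivAt_right (hggc.intervalIntegrable _ _)
      (hggc.stronglyMeasurableAtFilter _ _) hggc.continuousAt
  have hFFc : Continuous FF := continuous_iff_continuousAt.mpr fun u => (hFFd u).continuousAt
  set kk : ℝ → ℂ := fun t => FF t - ff t with hkkdef
  have hkkc : Continuous kk := hFFc.sub hffc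
  have hIId : ∀ u : ℝ, HasDerivAt (fun v => ∫ t in (0:ℝ)..v, kk t) (kk u) u := fun u =>
    integral_hasDerivAt_right (hkkc.intervalIntegrable _ _)
      (hkkc.stronglyMeasurableAtFilter _ _) hkkc.continuousAt
  set GG : ℝ → ℂ := fun u => (∫ t in (0:ℝ)..T, kk t) - ∫ t in (0:ℝ)..u, kk t with hGGdef
  have hGGd : ∀ u : ℝ, HasDerivAt GG (-(kk u)) u := fun u => (hIId u).const_sub _
  have hGGc : Continuous GG :=
    continuous_const.sub (continuous_iff_continuousAt.mpr fun u => (hIId u).continuousAt)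
  have hGGT : GG T = 0 := sub_self _
  have hE1 := hint GG kk hGGd hkkc hGGT
  -- integration by parts
  have hconjc : Continuous fun t => (starRingEnd ℂ) (kk t) := Complex.continuous_conj.comp hkkc
  have hconjGGc : Continuous fun t => (starRingEnd ℂ) (GG t) := Complex.continuous_conj.comp hGGc
  have hPhid : ∀ t : ℝ, HasDerivAt (fun u => (starRingEnd ℂ) (GG u) * FF u)
      ((starRingEnd ℂ) (-(kk t)) * FF t + (starRingEnd ℂ) (GG t) * gg t) t := by
    intro t
    have hconj : HasDerivAt (fun u => (starRingEnd ℂ) (GG u)) ((starRingEnd ℂ) (-(kk t))) t := by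
      have h := Complex.conjCLE.hasFDerivAt.comp_hasDerivAt t (hGGd t)
      simpa [Function.comp_def] using h
    exact hconj.mul (hFFd t)
  have hIBP : (∫ t in (0:ℝ)..T,
      ((starRingEnd ℂ) (-(kk t)) * FF t + (starRingEnd ℂ) (GG t) * gg t)) = 0 := by
    rw [integral_eq_sub_of_hasDerivAt (fun t _ => hPhid t)
      (((hconjc.neg.mul hFFc).add (hconjGGc.mul hggc)).intervalIntegrable _ _)]
    have hFF0 : FF 0 = 0 := integral_same
    rw [hGGT, hFF0]
    simp
  have hi1 : IntervalIntegrable (fun t => (starRingEnd ℂ) (-(kk t)) * FF t)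
      MeasureTheory.volume 0 T := (hconjc.neg.mul hFFc).intervalIntegrable _ _
  have hi2 : IntervalIntegrable (fun t => (starRingEnd ℂ) (GG t) * gg t)
      MeasureTheory.volume 0 T := (hconjGGc.mul hggc).intervalIntegrable _ _
  have hi3 : IntervalIntegrable (fun t => (starRingEnd ℂ) (kk t) * FF t)
      MeasureTheory.volume 0 T := (hconjc.mul hFFc).intervalIntegrable _ _
  have hi4 : IntervalIntegrable (fun t => (starRingEnd ℂ) (kk t) * ff t)
      MeasureTheory.volume 0 T := (hconjc.mul hffc).intervalIntegrable _ _
  rw [integral_add hi1 hi2] at hIBP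
  rw [integral_sub hi2 hi4] at hE1
  have hneg : (∫ t in (0:ℝ)..T, (starRingEnd ℂ) (-(kk t)) * FF t) =
      -∫ t in (0:ℝ)..T, (starRingEnd ℂ) (kk t) * FF t := by
    rw [← intervalIntegral.integral_neg]
    congr 1
    funext t
    rw [map_neg, neg_mul]
  rw [hneg] at hIBP
  -- now: ∫ conj kk * kk = 0
  have hzero : (∫ t in (0:ℝ)..T, (starRingEnd ℂ) (kk t) * kk t) = 0 := by
    have h5 : (∫ t in (0:ℝ)..T, (starRingEnd ℂ) (kk t) * kk t) =
        (∫ t in (0:ℝ)..T, (starRingEnd ℂ) (kk t) * FF t) -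
          ∫ t in (0:ℝ)..T, (starRingEnd ℂ) (kk t) * ff t := by
      rw [← integral_sub hi3 hi4]
      congr 1
      funext t
      rw [← mul_sub]
    rw [h5]
    have h6 : (∫ t in (0:ℝ)..T, (starRingEnd ℂ) (GG t) * gg t) =
        ∫ t in (0:ℝ)..T, (starRingEnd ℂ) (kk t) * FF t := by linear_combination hIBP
    linear_combination hE1 - h6
  have hreal : (∫ t in (0:ℝ)..T, ‖kk t‖ ^ 2) = (0:ℝ) := by
    have h7 : (∫ t in (0:ℝ)..T, (((‖kk t‖ ^ 2 : ℝ)) : ℂ)) = 0 := by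
      rw [← hzero]
      congr 1
      funext t
      rw [RCLike.conj_mul]
      norm_cast
    rw [intervalIntegral.integral_ofReal] at h7
    exact_mod_cast h7
  -- conclude kk s = 0
  have hqc : Continuous fun t => ‖kk t‖ ^ 2 := (hkkc.norm).pow 2
  set Q : ℝ → ℝ := fun u => ∫ t in (0:ℝ)..u, ‖kk t‖ ^ 2 with hQdef
  have hQd : ∀ u : ℝ, HasDerivAt Q (‖kk u‖ ^ 2) u := fun u =>
    integral_hasDerivAt_right (hqc.intervalIntegrable _ _)
      (hqc.stronglyMeasurableAtFilter _ _) hqc.continuousAt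
  have hQzero : ∀ u ∈ Set.Icc (0:ℝ) T, Q u = 0 := by
    intro u hu
    have h8 : 0 ≤ Q u := integral_nonneg hu.1 fun t _ => sq_nonneg _
    have h9 : Q T = Q u + ∫ t in u..T, ‖kk t‖ ^ 2 :=
      (integral_add_adjacent_intervals (hqc.intervalIntegrable _ _)
        (hqc.intervalIntegrable _ _)).symm
    have h10 : 0 ≤ ∫ t in u..T, ‖kk t‖ ^ 2 := integral_nonneg hu.2 fun t _ => sq_nonneg _
    have h11 : Q T = 0 := hreal
    linarith
  have hkks : ‖kk s‖ ^ 2 = 0 := by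
    have hslope := aux_slope_right_of_hasDerivAt (hQd s)
    have hev : (fun e : ℝ => e⁻¹ • (Q (s + e) - Q s)) =ᶠ[nhdsWithin 0 (Set.Ioi 0)]
        (fun _ => (0:ℝ)) := by
      filter_upwards [Ioo_mem_nhdsGT_of_mem (Set.mem_Ico.mpr ⟨le_rfl, sub_pos.mpr hsT⟩)]
        with e he
      have h12 : Q (s + e) = 0 := hQzero _ ⟨by linarith [he.1], by linarith [he.2]⟩
      have h13 : Q s = 0 := hQzero _ ⟨hs0, hsT.le⟩
      rw [h12, h13, sub_zero, smul_zero]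
    have := hslope.congr' hev
    exact tendsto_nhds_unique this tendsto_const_nhds
  have hkk0 : kk s = 0 := by
    have := pow_eq_zero_iff (n := 2) (by norm_num) |>.mp hkks
    exact norm_eq_zero.mp this
  have : FF s - ff s = 0 := hkk0
  have h14 : FF s = ff s := by linear_combination this
  rw [← h14]

end ScalarODE
section AstarSmul

variable {H : Type*} [NormedAddCommGroup H] [InnerProductSpace ℂ H] [CompleteSpace H]

lemma aux_astar_smul {D0 : Set H} {A : H → H} {domAstar : Set H} {Astar : H → H}
    (hdense : Dense D0)
    (hadj : ∀ z ∈ domAstar, ∀ x ∈ D0, ⟪Astar z, x⟫ = ⟪z, A x⟫)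
    (hadjdom : ∀ z : H, (∃ w : H, ∀ x ∈ D0, ⟪w, x⟫ = ⟪z, A x⟫) → z ∈ domAstar)
    {φ : H} (hφ : φ ∈ domAstar) (c : ℂ) :
    c • φ ∈ domAstar ∧ Astar (c • φ) = c • Astar φ := by
  have hmem : c • φ ∈ domAstar := by
    apply hadjdom
    refine ⟨c • Astar φ, fun x hx => ?_⟩
    rw [inner_smul_left, inner_smul_left, hadj φ hφ x hx]
  refine ⟨hmem, ?_⟩
  have hz : Astar (c • φ) - c • Astar φ = 0 := by
    apply aux_dense_eq_zero hdense
    intro x hx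
    rw [inner_sub_left, hadj _ hmem x hx, inner_smul_left, inner_smul_left, hadj φ hφ x hx,
      sub_self]
  exact sub_eq_zero.mp hz

end AstarSmul
/-- Uniqueness of weak solutions (Lemma 3 of the paper). -/
theorem statement_9 {H : Type*} [NormedAddCommGroup H] [InnerProductSpace ℂ H] [CompleteSpace H]
    [TopologicalSpace.SeparableSpace H]
    {m : ℕ} (hm : 0 < m)
    (domA : Set H) (A : H → H) (Bop : H → EuclideanSpace ℂ (Fin m))
    (hdomA : ∀ x ∈ domA, ∀ y ∈ domA, ∀ a b : ℂ, a • x + b • y ∈ domA)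
    (hAlin : IsLinearOn A domA) (hBoplin : IsLinearOn Bop domA)
    (domAstar : Set H) (Astar : H → H)
    (hdense : Dense {x : H | x ∈ domA ∧ Bop x = 0})
    (hadjdom : ∀ z : H, z ∈ domAstar ↔ ∃ w : H, ∀ x ∈ domA, Bop x = 0 → ⟪w, x⟫ = ⟪z, A x⟫)
    (hadj : ∀ z ∈ domAstar, ∀ x ∈ domA, Bop x = 0 → ⟪Astar z, x⟫ = ⟪z, A x⟫)
    (B : EuclideanSpace ℂ (Fin m) →L[ℂ] H)
    (hBdom : ∀ v, B v ∈ domA) (hBlift : ∀ v, Bop (B v) = v)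
    (hABcont : Continuous fun v => A (B v))
    (S : ℝ → H →L[ℂ] H)
    (hS : IsC0SemigroupGeneratedBy S {x : H | x ∈ domA ∧ Bop x = 0} A)
    (hinj : ∀ x ∈ domA, Bop x = 0 → A x = 0 → x = 0) :
    ∀ (X0 : H) (d : ℝ → EuclideanSpace ℂ (Fin m)) (U : ℝ → H),
      ContinuousOn d (Set.Ici 0) → ContinuousOn U (Set.Ici 0) →
      ∀ X Y : ℝ → H,
        IsWeakSolution A domAstar Astar B X0 d U X →
        IsWeakSolution A domAstar Astar B X0 d U Y →
        ∀ t ∈ Set.Ici (0:ℝ), X t = Y t := by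
  intro X0 d U hd hU X Y hX hY
  set D0 : Set H := {x : H | x ∈ domA ∧ Bop x = 0} with hD0def
  have hXc := hX.1
  have hYc := hY.1
  -- basic algebraic facts
  have h0dom : (0:H) ∈ domA := by have h := hBdom 0; rwa [map_zero] at h
  have hB00 : Bop (0:H) = 0 := by have h := hBlift 0; rwa [map_zero] at h
  have hA00 : A (0:H) = 0 := by
    have h := hAlin.2 0 0 h0dom
    rwa [zero_smul, zero_smul] at h
  have hG0 : (0:H) ∈ D0 ∧ A 0 = 0 := ⟨⟨h0dom, hB00⟩, hA00⟩
  have hGsub : ∀ (a : ℂ) (x y : H), x ∈ D0 → y ∈ D0 →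
      (a • x + y ∈ D0 ∧ A (a • x + y) = a • A x + A y) := by
    intro a x y hx hy
    have hax : a • x ∈ domA := by
      have h := hdomA x hx.1 x hx.1 a 0
      rwa [zero_smul, add_zero] at h
    have hmemA : a • x + y ∈ domA := by
      have h := hdomA x hx.1 y hy.1 a 1
      rwa [one_smul] at h
    have hBop0 : Bop (a • x + y) = 0 := by
      rw [hBoplin.1 _ hax _ hy.1, hBoplin.2 a x hx.1, hx.2, hy.2, smul_zero, add_zero]
    have hAeq : A (a • x + y) = a • A x + A y := by
      rw [hAlin.1 _ hax _ hy.1, hAlin.2 a x hx.1]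
    exact ⟨⟨hmemA, hBop0⟩, hAeq⟩
  have hadjD : ∀ z ∈ domAstar, ∀ x ∈ D0, ⟪Astar z, x⟫ = ⟪z, A x⟫ :=
    fun z hz x hx => hadj z hz x hx.1 hx.2
  have hadjdomD : ∀ z : H, (∃ w : H, ∀ x ∈ D0, ⟪w, x⟫ = ⟪z, A x⟫) → z ∈ domAstar := by
    rintro z ⟨w, hw⟩
    exact (hadjdom z).mpr ⟨w, fun x hx hBx => hw x ⟨hx, hBx⟩⟩
  -- Step 1 : weak ODE
  have claim1 : ∀ φ ∈ domAstar, ∀ s : ℝ, 0 ≤ s →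
      ⟪φ, X s - Y s⟫ = ∫ t in (0:ℝ)..s, ⟪Astar φ, X t - Y t⟫ := by
    intro φ hφ s hs0
    set T : ℝ := s + 1 with hTdef
    have hT0 : (0:ℝ) < T := by rw [hTdef]; linarith
    have hsT : s < T := by rw [hTdef]; linarith
    have hπcont : Continuous fun t : ℝ => max (min t T) 0 :=
      (continuous_id.min continuous_const).max continuous_const
    have hπmem : ∀ t : ℝ, max (min t T) 0 ∈ Set.Ici (0:ℝ) := fun t => Set.mem_Ici.mpr (le_max_right _ _)
    have hπeq : ∀ t ∈ Set.Icc (0:ℝ) T, max (min t T) 0 = t := fun t ht => by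
      rw [min_eq_left ht.2, max_eq_left ht.1]
    have hWcont : Continuous fun t : ℝ => X (max (min t T) 0) - Y (max (min t T) 0) :=
      (hXc.comp_continuous hπcont hπmem).sub (hYc.comp_continuous hπcont hπmem)
    have hffc : Continuous fun t : ℝ => ⟪φ, X (max (min t T) 0) - Y (max (min t T) 0)⟫ :=
      continuous_const.inner hWcont
    have hggc : Continuous fun t : ℝ => ⟪Astar φ, X (max (min t T) 0) - Y (max (min t T) 0)⟫ :=
      continuous_const.inner hWcont
    have hsmul : ∀ c : ℂ, c • φ ∈ domAstar ∧ Astar (c • φ) = c • Astar φ := fun c =>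
      aux_astar_smul hdense hadjD hadjdomD hφ c
    have hint : ∀ GG kk : ℝ → ℂ, (∀ u : ℝ, HasDerivAt GG (-(kk u)) u) → Continuous kk →
        GG T = 0 →
        (∫ t in (0:ℝ)..T, ((starRingEnd ℂ) (GG t) *
            ⟪Astar φ, X (max (min t T) 0) - Y (max (min t T) 0)⟫ -
          (starRingEnd ℂ) (kk t) * ⟪φ, X (max (min t T) 0) - Y (max (min t T) 0)⟫)) = 0 := by
      intro GG kk hGGd hkkc hGGT
      have hGGc : Continuous GG := continuous_iff_continuousAt.mpr fun u => (hGGd u).continuousAt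
      have hmemz : ∀ t ∈ Set.Icc (0:ℝ) T, GG t • φ ∈ domAstar := fun t _ => (hsmul (GG t)).1
      have hderivz : ∀ t ∈ Set.Icc (0:ℝ) T,
          HasDerivWithinAt (fun v : ℝ => GG v • φ) ((-(kk t)) • φ) (Set.Icc 0 T) t :=
        fun t _ => ((hGGd t).smul_const φ).hasDerivWithinAt
      have hz'c : ContinuousOn (fun t : ℝ => (-(kk t)) • φ) (Set.Icc (0:ℝ) T) :=
        ((hkkc.neg).smul continuous_const).continuousOn
      have hAz : (fun t : ℝ => Astar (GG t • φ)) = fun t : ℝ => GG t • Astar φ :=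
        funext fun t => (hsmul (GG t)).2
      have hAzc : ContinuousOn (fun t : ℝ => Astar (GG t • φ)) (Set.Icc (0:ℝ) T) := by
        rw [hAz]; exact (hGGc.smul continuous_const).continuousOn
      have hzT : GG T • φ = 0 := by rw [hGGT, zero_smul]
      have eqX := hX.2 T hT0 (fun v : ℝ => GG v • φ) (fun v : ℝ => (-(kk v)) • φ)
        hmemz hderivz hz'c hAzc hzT
      have eqY := hY.2 T hT0 (fun v : ℝ => GG v • φ) (fun v : ℝ => (-(kk v)) • φ)
        hmemz hderivz hz'c hAzc hzT
      have hIcc : Set.uIcc (0:ℝ) T = Set.Icc 0 T := Set.uIcc_of_le hT0.le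
      have hcc : ContinuousOn (fun t : ℝ => Astar (GG t • φ) + (-(kk t)) • φ)
          (Set.Icc (0:ℝ) T) := hAzc.add hz'c
      have hiX : IntervalIntegrable (fun t : ℝ => ⟪Astar (GG t • φ) + (-(kk t)) • φ, X t⟫)
          MeasureTheory.volume 0 T := by
        apply ContinuousOn.intervalIntegrable
        rw [hIcc]
        exact hcc.inner (hXc.mono fun t ht => ht.1)
      have hiY : IntervalIntegrable (fun t : ℝ => ⟪Astar (GG t • φ) + (-(kk t)) • φ, Y t⟫)
          MeasureTheory.volume 0 T := by
        apply ContinuousOn.intervalIntegrable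
        rw [hIcc]
        exact hcc.inner (hYc.mono fun t ht => ht.1)
      have hsub0 : (∫ t in (0:ℝ)..T, (⟪Astar (GG t • φ) + (-(kk t)) • φ, X t⟫ -
          ⟪Astar (GG t • φ) + (-(kk t)) • φ, Y t⟫)) = 0 := by
        rw [intervalIntegral.integral_sub hiX hiY, eqX, eqY, sub_self]
      rw [← hsub0]
      apply intervalIntegral.integral_congr
      intro t ht
      rw [hIcc] at ht
      have hπt : max (min t T) 0 = t := hπeq t ht
      show (starRingEnd ℂ) (GG t) * ⟪Astar φ, X (max (min t T) 0) - Y (max (min t T) 0)⟫ -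
          (starRingEnd ℂ) (kk t) * ⟪φ, X (max (min t T) 0) - Y (max (min t T) 0)⟫ =
        ⟪Astar (GG t • φ) + (-(kk t)) • φ, X t⟫ - ⟪Astar (GG t • φ) + (-(kk t)) • φ, Y t⟫
      rw [← inner_sub_right, (hsmul (GG t)).2, hπt, inner_add_left, inner_smul_left,
        inner_smul_left, map_neg]
      ring
    have hkey := aux_weak_ode_scalar hffc hggc hT0 hint hs0 hsT
    have h15 : max (min s T) 0 = s := hπeq s ⟨hs0, hsT.le⟩
    calc ⟪φ, X s - Y s⟫ = ⟪φ, X (max (min s T) 0) - Y (max (min s T) 0)⟫ := by rw [h15]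
      _ = ∫ t in (0:ℝ)..s, ⟪Astar φ, X (max (min t T) 0) - Y (max (min t T) 0)⟫ := hkey
      _ = ∫ t in (0:ℝ)..s, ⟪Astar φ, X t - Y t⟫ := by
          apply intervalIntegral.integral_congr
          intro t ht
          rw [Set.uIcc_of_le hs0] at ht
          show ⟪Astar φ, X (max (min t T) 0) - Y (max (min t T) 0)⟫ = ⟪Astar φ, X t - Y t⟫
          rw [hπeq t ⟨ht.1, ht.2.trans hsT.le⟩]
  -- Step 2 : the primitive u
  have hm0 : Continuous fun t : ℝ => max t 0 := continuous_id.max continuous_const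
  have hmm0 : ∀ t : ℝ, max t 0 ∈ Set.Ici (0:ℝ) := fun t => Set.mem_Ici.mpr (le_max_right _ _)
  have hWg : Continuous fun t : ℝ => X (max t 0) - Y (max t 0) :=
    (hXc.comp_continuous hm0 hmm0).sub (hYc.comp_continuous hm0 hmm0)
  set u : ℝ → H := fun v => ∫ t in (0:ℝ)..v, (X (max t 0) - Y (max t 0)) with hudef
  have hud : ∀ v : ℝ, HasDerivAt u (X (max v 0) - Y (max v 0)) v := fun v =>
    intervalIntegral.integral_hasDerivAt_right (hWg.intervalIntegrable _ _)
      (hWg.stronglyMeasurableAtFilter _ _) hWg.continuousAt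
  have hu0 : u 0 = 0 := intervalIntegral.integral_same
  have claim2 : ∀ s : ℝ, 0 ≤ s → ∀ φ ∈ domAstar, ⟪Astar φ, u s⟫ = ⟪φ, X s - Y s⟫ := by
    intro s hs0 φ hφ
    have h := aux_inner_intervalIntegral (a := (0:ℝ)) (b := s) hWg (Astar φ)
    have h17 : (∫ t in (0:ℝ)..s, ⟪Astar φ, X (max t 0) - Y (max t 0)⟫) =
        ∫ t in (0:ℝ)..s, ⟪Astar φ, X t - Y t⟫ := by
      apply intervalIntegral.integral_congr
      intro t ht
      rw [Set.uIcc_of_le hs0] at ht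
      show ⟪Astar φ, X (max t 0) - Y (max t 0)⟫ = ⟪Astar φ, X t - Y t⟫
      rw [max_eq_left ht.1]
    calc ⟪Astar φ, u s⟫ = ∫ t in (0:ℝ)..s, ⟪Astar φ, X (max t 0) - Y (max t 0)⟫ := h
      _ = ∫ t in (0:ℝ)..s, ⟪Astar φ, X t - Y t⟫ := h17
      _ = ⟪φ, X s - Y s⟫ := (claim1 φ hφ s hs0).symm
  have claim3 : ∀ s : ℝ, 0 ≤ s → u s ∈ D0 ∧ A (u s) = X s - Y s := fun s hs0 =>
    aux_weak_graph hdense hG0 hGsub hadjD hadjdomD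
      (fun x v w hxD hxv hxw => aux_graph_limit hS x hxD hxv hxw)
      (fun φ hφ => claim2 s hs0 φ hφ)
  -- Step 3 : uniqueness for the semigroup
  have claim4 : ∀ τ : ℝ, 0 ≤ τ → u τ = 0 := by
    intro τ hτ0
    rcases eq_or_lt_of_le hτ0 with h | hτpos
    · rw [← h]; exact hu0
    obtain ⟨M, hM0, hM⟩ := aux_bound hS τ
    have hucont : Continuous u := continuous_iff_continuousAt.mpr fun v => (hud v).continuousAt
    have hgc : ContinuousOn (fun r : ℝ => S (max (τ - r) 0) (u (max r 0))) (Set.Icc 0 τ) := by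
      intro r₀ hr₀
      have hT2 : Continuous fun r : ℝ => S (max (τ - r) 0) (u (max r₀ 0)) :=
        (aux_orbit_cont hS (u (max r₀ 0))).comp (continuous_const.sub continuous_id)
      have hT1 : Filter.Tendsto (fun r : ℝ => S (max (τ - r) 0) (u (max r 0)) -
          S (max (τ - r) 0) (u (max r₀ 0))) (nhdsWithin r₀ (Set.Icc 0 τ)) (nhds 0) := by
        apply squeeze_zero_norm' (a := fun r => M * ‖u (max r 0) - u (max r₀ 0)‖)
        · filter_upwards [self_mem_nhdsWithin] with r hr
          have hmem : max (τ - r) 0 ∈ Set.Icc (0:ℝ) τ :=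
            ⟨le_max_right _ _, max_le (show τ - r ≤ τ by linarith [hr.1]) hτ0⟩
          calc ‖S (max (τ - r) 0) (u (max r 0)) - S (max (τ - r) 0) (u (max r₀ 0))‖
              = ‖S (max (τ - r) 0) (u (max r 0) - u (max r₀ 0))‖ := by rw [map_sub]
            _ ≤ ‖S (max (τ - r) 0)‖ * ‖u (max r 0) - u (max r₀ 0)‖ :=
                (S (max (τ - r) 0)).le_opNorm _
            _ ≤ M * ‖u (max r 0) - u (max r₀ 0)‖ :=
                mul_le_mul_of_nonneg_right (hM _ hmem) (norm_nonneg _)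
        · have hcont2 : Continuous fun r : ℝ => M * ‖u (max r 0) - u (max r₀ 0)‖ :=
            continuous_const.mul (((hucont.comp hm0).sub continuous_const).norm)
          have h : Filter.Tendsto (fun r : ℝ => M * ‖u (max r 0) - u (max r₀ 0)‖)
              (nhdsWithin r₀ (Set.Icc 0 τ)) (nhds (M * ‖u (max r₀ 0) - u (max r₀ 0)‖)) :=
            (hcont2.tendsto r₀).mono_left nhdsWithin_le_nhds
          simpa using h
      have hadd := hT1.add (hT2.continuousAt.continuousWithinAt
        (s := Set.Icc (0:ℝ) τ) (x := r₀))
      rw [zero_add] at hadd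
      refine (Filter.Tendsto.congr (fun r => ?_) hadd)
      abel
    have hgd : ∀ r ∈ Set.Ico (0:ℝ) τ,
        HasDerivWithinAt (fun r : ℝ => S (max (τ - r) 0) (u (max r 0))) 0 (Set.Ici r) r := by
      intro r hr
      apply aux_hasDerivWithinAt_right
      have hur : u r ∈ D0 := (claim3 r hr.1).1
      have hAur : A (u r) = X r - Y r := (claim3 r hr.1).2
      have hv1 : Filter.Tendsto (fun e : ℝ => e⁻¹ • (u (r + e) - u r))
          (nhdsWithin 0 (Set.Ioi 0)) (nhds (X r - Y r)) := by
        have h := aux_slope_right_of_hasDerivAt (hud r)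
        rwa [max_eq_left hr.1] at h
      have hv2 : Filter.Tendsto (fun e : ℝ => e⁻¹ • (S e (u r) - u r))
          (nhdsWithin 0 (Set.Ioi 0)) (nhds (X r - Y r)) := by
        have h := hS.2.2.2.2 (u r) hur
        rwa [hAur] at h
      have hv : Filter.Tendsto (fun e : ℝ => e⁻¹ • (u (r + e) - u r) - e⁻¹ • (S e (u r) - u r))
          (nhdsWithin 0 (Set.Ioi 0)) (nhds 0) := by
        have h := hv1.sub hv2
        rwa [sub_self] at h
      apply squeeze_zero_norm'
        (a := fun e => M * ‖e⁻¹ • (u (r + e) - u r) - e⁻¹ • (S e (u r) - u r)‖)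
      · filter_upwards [Ioo_mem_nhdsGT_of_mem (Set.mem_Ico.mpr ⟨le_rfl, sub_pos.mpr hr.2⟩)]
          with e he
        have he0 : 0 < e := he.1
        have heτ : e < τ - r := he.2
        have h1 : max (τ - (r + e)) 0 = τ - r - e := by
          rw [max_eq_left (show (0:ℝ) ≤ τ - (r + e) by linarith)]; ring
        have h2 : max (r + e) 0 = r + e := max_eq_left (show (0:ℝ) ≤ r + e by linarith [hr.1])
        have h3 : max (τ - r) 0 = τ - r := max_eq_left (show (0:ℝ) ≤ τ - r by linarith)
        have h4 : max r 0 = r := max_eq_left hr.1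
        have h5 : S (τ - r) (u r) = S (τ - r - e) (S e (u r)) := by
          have hco : S ((τ - r - e) + e) = (S (τ - r - e)).comp (S e) :=
            hS.2.1 (τ - r - e) (show (0:ℝ) ≤ τ - r - e by linarith) e he0.le
          have harg : (τ - r - e) + e = τ - r := by ring
          rw [harg] at hco
          rw [hco]
          rfl
        have hids : e⁻¹ • (S (max (τ - (r + e)) 0) (u (max (r + e) 0)) -
            S (max (τ - r) 0) (u (max r 0))) =
            S (τ - r - e) (e⁻¹ • (u (r + e) - u r) - e⁻¹ • (S e (u r) - u r)) := by
          have harg2 : e⁻¹ • (u (r + e) - u r) - e⁻¹ • (S e (u r) - u r) =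
              e⁻¹ • (u (r + e) - S e (u r)) := by
            rw [← smul_sub]
            congr 1
            abel
          rw [h1, h2, h3, h4, h5, harg2, (S (τ - r - e)).map_smul_of_tower, map_sub]
        rw [hids]
        have hmem : τ - r - e ∈ Set.Icc (0:ℝ) τ := ⟨by linarith, by linarith [hr.1]⟩
        calc ‖S (τ - r - e) (e⁻¹ • (u (r + e) - u r) - e⁻¹ • (S e (u r) - u r))‖
            ≤ ‖S (τ - r - e)‖ * ‖e⁻¹ • (u (r + e) - u r) - e⁻¹ • (S e (u r) - u r)‖ :=
              (S (τ - r - e)).le_opNorm _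
          _ ≤ M * ‖e⁻¹ • (u (r + e) - u r) - e⁻¹ • (S e (u r) - u r)‖ :=
              mul_le_mul_of_nonneg_right (hM _ hmem) (norm_nonneg _)
      · have h := (hv.norm).const_mul M
        simpa using h
    have hfinal := eq_of_has_deriv_right_eq (f' := fun _ : ℝ => (0:H)) hgd
      (fun r hr => hasDerivWithinAt_const r _ _)
      hgc continuousOn_const rfl
    have h18 := hfinal τ ⟨hτ0, le_rfl⟩
    have hgτ : S (max (τ - τ) 0) (u (max τ 0)) = u τ := by
      rw [sub_self, max_self, hS.1, max_eq_left hτ0]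
      rfl
    have hg0 : S (max (τ - 0) 0) (u (max 0 0)) = 0 := by
      rw [sub_zero, max_self, hu0, map_zero]
    rw [hgτ, hg0] at h18
    exact h18
  -- Conclusion
  intro t ht
  have ht0 : (0:ℝ) ≤ t := ht
  have h19 := (claim3 t ht0).2
  rw [claim4 t ht0, hA00] at h19
  exact sub_eq_zero.mp h19.symm
end
end
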